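/- arXiv:2507.00093 — 5 statements merged into one kernel-verified Lean document; each statement's English description precedes it below -/
import Mathlib

section
/- Let G be a DMG with nodes V⁺ = V ∪ S, and let H be a σ-MAG that represents G given S. Let a, b ∈ V and Z ⊆ V. If π is a path between a and b in H that is m-open given Z, then every node on π belongs to Anc_G({a, b} ∪ Z ∪ S). -/
/-- An edge mark: tail or arrowhead. -/
inductive Mark : Type
  | tail : Mark
  | arrow : Mark
  deriving DecidableEq

/-- A mixed graph, with directed edges (`dir a b` means `a → b`), bidirected edges and
undirected edges. -/
structure MixedGraph (V : Type*) where
  dir : V → V → Prop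
  bidir : V → V → Prop
  undir : V → V → Prop
  bidir_symm : ∀ a b, bidir a b → bidir b a
  undir_symm : ∀ a b, undir a b → undir b a

variable {V : Type*}

/-- There is an edge between `x` and `y` carrying mark `m₁` at `x` and mark `m₂` at `y`. -/
def MixedGraph.EdgeMk (G : MixedGraph V) (x y : V) : Mark → Mark → Prop
  | Mark.tail, Mark.arrow => G.dir x y
  | Mark.arrow, Mark.tail => G.dir y x
  | Mark.arrow, Mark.arrow => G.bidir x y
  | Mark.tail, Mark.tail => G.undir x y

theorem MixedGraph.edgeMk_symm {G : MixedGraph V} {x y : V} {m₁ m₂ : Mark}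
    (h : G.EdgeMk x y m₁ m₂) : G.EdgeMk y x m₂ m₁ := by
  cases m₁ <;> cases m₂ <;>
    first
      | exact h
      | exact G.bidir_symm _ _ h
      | exact G.undir_symm _ _ h

/-- `x` and `y` are adjacent: some edge joins them. -/
def MixedGraph.Adj (G : MixedGraph V) (x y : V) : Prop :=
  G.dir x y ∨ G.dir y x ∨ G.bidir x y ∨ G.undir x y

/-- There is an edge between `a` and `b` with an arrowhead at `a` (i.e. `a ←∗ b`). -/
def MixedGraph.ArrowAt (G : MixedGraph V) (a b : V) : Prop :=
  G.dir b a ∨ G.bidir a b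

/-- There is an edge between `a` and `b` with a tail at `a` (i.e. `a —∗ b`). -/
def MixedGraph.TailAt (G : MixedGraph V) (a b : V) : Prop :=
  G.dir a b ∨ G.undir a b

/-- A walk of length `n`: vertices `vert 0, …, vert n`; the `i`-th edge joins `vert i`
and `vert (i+1)`, carrying mark `mk1 i` at `vert i` and mark `mk2 i` at `vert (i+1)`. -/
structure MixedGraph.Walk (G : MixedGraph V) (n : ℕ) where
  vert : ℕ → V
  mk1 : ℕ → Mark
  mk2 : ℕ → Mark
  valid : ∀ i < n, G.EdgeMk (vert i) (vert (i + 1)) (mk1 i) (mk2 i)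

/-- A walk is a path if its vertices are pairwise distinct. -/
def MixedGraph.Walk.IsPath {G : MixedGraph V} {n : ℕ} (w : G.Walk n) : Prop :=
  ∀ i j, i ≤ n → j ≤ n → w.vert i = w.vert j → i = j

/-- Position `k` is a collider on the walk: both incident edges have an arrowhead
at `vert k`. -/
def MixedGraph.Walk.IsCollider {G : MixedGraph V} {n : ℕ} (w : G.Walk n) (k : ℕ) : Prop :=
  0 < k ∧ k < n ∧ w.mk2 (k - 1) = Mark.arrow ∧ w.mk1 k = Mark.arrow

/-- `a` is an ancestor of `b`: there is a directed walk from `a` to `b`. -/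
def MixedGraph.Anc (G : MixedGraph V) (a b : V) : Prop :=
  Relation.ReflTransGen G.dir a b

/-- `a` is an ancestor of some element of `A`. -/
def MixedGraph.AncS (G : MixedGraph V) (a : V) (A : Set V) : Prop :=
  ∃ b ∈ A, G.Anc a b

/-- `b` lies in the strongly connected component of `a`. -/
def MixedGraph.Sc (G : MixedGraph V) (a b : V) : Prop :=
  G.Anc a b ∧ G.Anc b a

/-- There is an anterior path from `a` to `b`: a path all of whose edges have a tail
mark at the endpoint nearer `a`. -/
def MixedGraph.AnteriorPath (G : MixedGraph V) (a b : V) : Prop :=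
  ∃ (n : ℕ) (w : G.Walk n), w.IsPath ∧ w.vert 0 = a ∧ w.vert n = b ∧
    ∀ i < n, w.mk1 i = Mark.tail

/-- The walk is inducing: every non-endpoint node is a collider that is an ancestor
of one of the endpoints. -/
def MixedGraph.Walk.IsInducing {G : MixedGraph V} {n : ℕ} (w : G.Walk n) : Prop :=
  ∀ k, 0 < k → k < n →
    w.IsCollider k ∧ (G.Anc (w.vert k) (w.vert 0) ∨ G.Anc (w.vert k) (w.vert n))

/-- There is an inducing path between `a` and `b`. -/
def MixedGraph.InducingPath (G : MixedGraph V) (a b : V) : Prop :=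
  ∃ (n : ℕ) (w : G.Walk n), w.IsPath ∧ w.vert 0 = a ∧ w.vert n = b ∧ w.IsInducing

/-- There is an inducing walk between `a` and `b`. -/
def MixedGraph.InducingWalk (G : MixedGraph V) (a b : V) : Prop :=
  ∃ (n : ℕ) (w : G.Walk n), w.vert 0 = a ∧ w.vert n = b ∧ w.IsInducing

/-- The neighborhood of `a` (its undirected-edge neighbors) is complete. -/
def MixedGraph.CompleteNbh (G : MixedGraph V) (a : V) : Prop :=
  ∀ b c, G.undir a b → G.undir a c → b ≠ c → G.undir b c

/-- A σ-maximal ancestral graph (σ-MAG). -/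
structure MixedGraph.IsSigmaMAG (G : MixedGraph V) : Prop where
  /-- no self-loops -/
  no_self : ∀ a : V, ¬ G.dir a a ∧ ¬ G.bidir a a ∧ ¬ G.undir a a
  /-- at most one edge between any two nodes -/
  at_most_one : ∀ a b : V,
    (G.dir a b → ¬ G.dir b a ∧ ¬ G.bidir a b ∧ ¬ G.undir a b) ∧
    (G.bidir a b → ¬ G.undir a b)
  /-- ancestral: an anterior path from `a` to `b` excludes an edge into `a` -/
  ancestral : ∀ a b : V, G.AnteriorPath a b → ¬ G.ArrowAt a b
  /-- maximal: no inducing path between non-adjacent nodes -/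
  maximal : ∀ a b : V, a ≠ b → ¬ G.Adj a b → ¬ G.InducingPath a b
  /-- σ-complete, part 1: `a ∗→ b — c` forces `a, c` adjacent -/
  sigma_complete₁ : ∀ a b c : V, G.ArrowAt b a → G.undir b c → G.Adj a c
  /-- σ-complete, part 2: `a ∗→ b — c` and `b — d` force `c, d` adjacent -/
  sigma_complete₂ : ∀ a b c d : V, G.ArrowAt b a → G.undir b c → G.undir b d →
    c ≠ d → G.Adj c d

/-- The walk is m-open given `Z`. -/
def MixedGraph.Walk.MOpen {G : MixedGraph V} {n : ℕ} (w : G.Walk n) (Z : Set V) : Prop :=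
  (∀ k ≤ n, ¬ w.IsCollider k → w.vert k ∉ Z) ∧
  (∀ k, w.IsCollider k → G.AncS (w.vert k) Z) ∧
  (∀ k, 0 < k → k < n →
    ¬ (w.mk2 (k - 1) = Mark.arrow ∧ w.mk1 k = Mark.tail ∧ w.mk2 k = Mark.tail) ∧
    ¬ (w.mk1 (k - 1) = Mark.tail ∧ w.mk2 (k - 1) = Mark.tail ∧ w.mk1 k = Mark.arrow))

/-- `X` is m-separated from `Y` given `Z`: every walk from `X` to `Y` is m-blocked. -/
def MixedGraph.MSep (G : MixedGraph V) (X Y Z : Set V) : Prop :=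
  ∀ (n : ℕ) (w : G.Walk n), w.vert 0 ∈ X → w.vert n ∈ Y → ¬ w.MOpen Z

/-- A directed mixed graph (DMG): no undirected edges and no self-loops. -/
def MixedGraph.IsDMG (G : MixedGraph V) : Prop :=
  (∀ a b : V, ¬ G.undir a b) ∧ ∀ a : V, ¬ G.dir a a ∧ ¬ G.bidir a a

/-- Position `k` is an unblockable non-collider on the walk (in a DMG). -/
def MixedGraph.Walk.Unblockable {G : MixedGraph V} {n : ℕ} (w : G.Walk n) (k : ℕ) : Prop :=
  0 < k ∧ k < n ∧
  ((w.mk1 (k - 1) = Mark.arrow ∧ w.mk2 (k - 1) = Mark.tail ∧ w.mk1 k = Mark.arrow ∧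
      G.Sc (w.vert k) (w.vert (k - 1))) ∨
   (w.mk2 (k - 1) = Mark.arrow ∧ w.mk1 k = Mark.tail ∧ w.mk2 k = Mark.arrow ∧
      G.Sc (w.vert k) (w.vert (k + 1))) ∨
   (w.mk1 (k - 1) = Mark.arrow ∧ w.mk2 (k - 1) = Mark.tail ∧
      w.mk1 k = Mark.tail ∧ w.mk2 k = Mark.arrow ∧
      G.Sc (w.vert k) (w.vert (k - 1)) ∧ G.Sc (w.vert k) (w.vert (k + 1))))

/-- The walk is σ-open given `W`. -/
def MixedGraph.Walk.SigmaOpen {G : MixedGraph V} {n : ℕ} (w : G.Walk n) (W : Set V) : Prop :=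
  (∀ k, w.IsCollider k → G.AncS (w.vert k) W) ∧
  (∀ k ≤ n, ¬ w.IsCollider k → ¬ w.Unblockable k → w.vert k ∉ W)

/-- `X` is σ-separated from `Y` given `W`: every walk from `X` to `Y` is σ-blocked. -/
def MixedGraph.SigmaSep (G : MixedGraph V) (X Y W : Set V) : Prop :=
  ∀ (n : ℕ) (w : G.Walk n), w.vert 0 ∈ X → w.vert n ∈ Y → ¬ w.SigmaOpen W

/-- The walk is σ-inducing given `S`: each collider is an ancestor of the endpoints or
of `S`, and each non-endpoint non-collider is unblockable. -/
def MixedGraph.Walk.IsSigmaInducing {G : MixedGraph V} {n : ℕ} (w : G.Walk n) (S : Set V) :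
    Prop :=
  (∀ k, w.IsCollider k → G.AncS (w.vert k) ({w.vert 0, w.vert n} ∪ S)) ∧
  (∀ k, 0 < k → k < n → ¬ w.IsCollider k → w.Unblockable k)

/-- There is a σ-inducing path given `S` between `a` and `b`. -/
def MixedGraph.SigmaInducingPath (G : MixedGraph V) (S : Set V) (a b : V) : Prop :=
  ∃ (n : ℕ) (w : G.Walk n), w.IsPath ∧ w.vert 0 = a ∧ w.vert n = b ∧ w.IsSigmaInducing S

/-- The mixed graph `H` (on node set `V`) represents the graph `G` (on node set
`V⁺ = V ∪ S`, where `V` is embedded via `ι` and `S = (Set.range ι)ᶜ` is the set of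
selection nodes) given `S`. -/
def Represents {V W : Type*} (H : MixedGraph V) (G : MixedGraph W) (ι : V → W) : Prop :=
  Function.Injective ι ∧
  (∀ a : V, ¬ H.dir a a ∧ ¬ H.bidir a a ∧ ¬ H.undir a a) ∧
  (∀ a b : V,
    (H.dir a b → ¬ H.dir b a ∧ ¬ H.bidir a b ∧ ¬ H.undir a b) ∧
    (H.bidir a b → ¬ H.undir a b)) ∧
  (∀ a b : V, a ≠ b → (H.Adj a b ↔ G.SigmaInducingPath (Set.range ι)ᶜ (ι a) (ι b))) ∧
  (∀ a b : V, H.ArrowAt a b → ¬ G.AncS (ι a) ({ι b} ∪ (Set.range ι)ᶜ)) ∧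
  (∀ a b : V, H.TailAt a b → G.AncS (ι a) ({ι b} ∪ (Set.range ι)ᶜ))

/-- The walk (of length `n ≥ 3`) is a discriminating path for its second-to-last node
`vert (n-1)`: the endpoints are non-adjacent, and every node strictly between `vert 0`
and `vert (n-1)` is a collider and a parent of `vert n`. -/
def MixedGraph.Walk.IsDiscriminating {G : MixedGraph V} {n : ℕ} (w : G.Walk n) : Prop :=
  3 ≤ n ∧ w.IsPath ∧ ¬ G.Adj (w.vert 0) (w.vert n) ∧
  ∀ k, 0 < k → k < n - 1 → w.IsCollider k ∧ G.dir (w.vert k) (w.vert n)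

/-- The subwalk starting at position `i`, of length `m`. -/
def MixedGraph.Walk.shift {G : MixedGraph V} {n : ℕ} (w : G.Walk n) (i m : ℕ)
    (h : i + m ≤ n) : G.Walk m where
  vert k := w.vert (i + k)
  mk1 k := w.mk1 (i + k)
  mk2 k := w.mk2 (i + k)
  valid k hk := by
    have hv := w.valid (i + k) (by omega)
    have he : i + (k + 1) = i + k + 1 := by omega
    show G.EdgeMk (w.vert (i + k)) (w.vert (i + (k + 1))) (w.mk1 (i + k)) (w.mk2 (i + k))
    rw [he]
    exact hv

/-- The reversed walk. -/
def MixedGraph.Walk.reverse {G : MixedGraph V} {n : ℕ} (w : G.Walk n) : G.Walk n where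
  vert k := w.vert (n - k)
  mk1 k := w.mk2 (n - 1 - k)
  mk2 k := w.mk1 (n - 1 - k)
  valid i hi := by
    have hv := w.valid (n - 1 - i) (by omega)
    have h1 : n - 1 - i + 1 = n - i := by omega
    have h2 : n - (i + 1) = n - 1 - i := by omega
    rw [h1] at hv
    show G.EdgeMk (w.vert (n - i)) (w.vert (n - (i + 1))) (w.mk2 (n - 1 - i)) (w.mk1 (n - 1 - i))
    rw [h2]
    exact MixedGraph.edgeMk_symm hv

/-- `(a, b, c)` is an unshielded collider in `G`. -/
def MixedGraph.UnshieldedCollider (G : MixedGraph V) (a b c : V) : Prop :=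
  a ≠ c ∧ ¬ G.Adj a c ∧ G.ArrowAt b a ∧ G.ArrowAt b c

/-- Condition 1 for two σ-MAGs on the same node set: same adjacencies, same unshielded
colliders, and agreement of the collider status of the discriminated node on
corresponding discriminating paths. -/
def Condition1 {V : Type*} (H₁ H₂ : MixedGraph V) : Prop :=
  (∀ a b, H₁.Adj a b ↔ H₂.Adj a b) ∧
  (∀ a b c, H₁.UnshieldedCollider a b c ↔ H₂.UnshieldedCollider a b c) ∧
  (∀ (n : ℕ) (w₁ : H₁.Walk n) (w₂ : H₂.Walk n),
    (∀ k, w₂.vert k = w₁.vert k) →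
    w₁.IsDiscriminating → w₂.IsDiscriminating →
    (w₁.IsCollider (n - 1) ↔ w₂.IsCollider (n - 1)))

/-- `H₁` and `H₂` are m-Markov equivalent. -/
def MMarkovEquiv {V : Type*} (H₁ H₂ : MixedGraph V) : Prop :=
  ∀ X Y Z : Set V, H₁.MSep X Y Z ↔ H₂.MSep X Y Z

/-- Let `H` be a σ-MAG representing a DMG `G` given `S = (Set.range ι)ᶜ`. If `π` is an
m-open path given `Z` between `a` and `b` in `H`, then every node on `π` is in
`Anc_G({a, b} ∪ Z ∪ S)`. -/
theorem mOpen_path_nodes_are_ancestors {V W : Type*} (H : MixedGraph V)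
    (G : MixedGraph W) (ι : V → W) (hH : H.IsSigmaMAG) (hG : G.IsDMG)
    (hrep : Represents H G ι) (a b : V) (Z : Set V) (n : ℕ) (w : H.Walk n)
    (hpath : w.IsPath) (h0 : w.vert 0 = a) (hn : w.vert n = b) (hopen : w.MOpen Z) :
    ∀ k ≤ n, G.AncS (ι (w.vert k)) ({ι a, ι b} ∪ ι '' Z ∪ (Set.range ι)ᶜ) := by
  set T : Set W := {ι a, ι b} ∪ ι '' Z ∪ (Set.range ι)ᶜ with hT
  have memA : ι a ∈ T := Or.inl (Or.inl (Or.inl rfl))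
  have memB : ι b ∈ T := Or.inl (Or.inl (Or.inr rfl))
  have tailAnc : ∀ v u : V, H.TailAt v u → G.AncS (ι v) ({ι u} ∪ (Set.range ι)ᶜ) :=
    hrep.2.2.2.2.2
  have comp : ∀ x y : W, G.AncS x ({y} ∪ (Set.range ι)ᶜ) → G.AncS y T → G.AncS x T := by
    rintro x y ⟨u, hu, hxu⟩ hyT
    rcases hu with hu | hu
    · rcases hyT with ⟨t, ht, hyt⟩
      rw [Set.mem_singleton_iff] at hu
      subst hu
      exact ⟨t, ht, hxu.trans hyt⟩
    · exact ⟨u, Or.inr hu, hxu⟩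
  have hAncH : ∀ v z : V, H.Anc v z → G.AncS (ι v) ({ι z} ∪ (Set.range ι)ᶜ) := by
    intro v z h
    induction h using Relation.ReflTransGen.head_induction_on with
    | refl => exact ⟨ι z, Or.inl rfl, Relation.ReflTransGen.refl⟩
    | @head x y hd _ ih =>
      obtain ⟨u, hu, hxu⟩ := tailAnc x y (Or.inl hd)
      rcases hu with hu | hu
      · rw [Set.mem_singleton_iff] at hu
        subst hu
        obtain ⟨t, ht, hyt⟩ := ih
        exact ⟨t, ht, hxu.trans hyt⟩
      · exact ⟨u, Or.inr hu, hxu⟩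
  have colliderT : ∀ k, w.IsCollider k → G.AncS (ι (w.vert k)) T := by
    intro k hcol
    obtain ⟨z, hz, hanc⟩ := hopen.2.1 k hcol
    exact comp _ (ι z) (hAncH _ _ hanc)
      ⟨ι z, Or.inl (Or.inr ⟨z, hz, rfl⟩), Relation.ReflTransGen.refl⟩
  have tailRight : ∀ k, k < n → w.mk1 k = Mark.tail → H.TailAt (w.vert k) (w.vert (k + 1)) := by
    intro k hk ht
    have hv := w.valid k hk
    rw [ht] at hv
    cases h2 : w.mk2 k <;> rw [h2] at hv
    · exact Or.inr hv
    · exact Or.inl hv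
  have tailLeft : ∀ k, k < n → w.mk2 k = Mark.tail → H.TailAt (w.vert (k + 1)) (w.vert k) := by
    intro k hk ht
    have hv := w.valid k hk
    rw [ht] at hv
    cases h1 : w.mk1 k <;> rw [h1] at hv
    · exact Or.inr (H.undir_symm _ _ hv)
    · exact Or.inl hv
  have right : ∀ m k, 0 < m → k + m = n → w.mk1 k = Mark.tail →
      G.AncS (ι (w.vert k)) T := by
    intro m
    induction m with
    | zero => omega
    | succ m ih =>
      intro k _ hkm ht
      have hk : k < n := by omega
      have step := tailAnc _ _ (tailRight k hk ht)
      rcases Nat.eq_zero_or_pos m with hm | hm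
      · have hvb : w.vert (k + 1) = b := by rw [← hn]; congr 1; omega
        rw [hvb] at step
        exact comp _ _ step ⟨ι b, memB, Relation.ReflTransGen.refl⟩
      · have hk1 : k + 1 < n := by omega
        cases h1 : w.mk1 (k + 1) with
        | tail => exact comp _ _ step (ih (k + 1) hm (by omega) h1)
        | arrow =>
          cases h2 : w.mk2 k with
          | arrow => exact comp _ _ step (colliderT (k + 1) ⟨by omega, hk1, h2, h1⟩)
          | tail => exact absurd ⟨ht, h2, h1⟩ ((hopen.2.2 (k + 1) (by omega) hk1).2)
  have leftL : ∀ k, k ≤ n → w.mk2 (k - 1) = Mark.tail → 0 < k →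
      G.AncS (ι (w.vert k)) T := by
    intro k
    induction k with
    | zero => omega
    | succ k ih =>
      intro hkn ht _
      have hk : k < n := by omega
      have step := tailAnc _ _ (tailLeft k hk ht)
      rcases Nat.eq_zero_or_pos k with h0k | h0k
      · subst h0k
        rw [h0] at step
        exact comp _ _ step ⟨ι a, memA, Relation.ReflTransGen.refl⟩
      · cases h2 : w.mk2 (k - 1) with
        | tail => exact comp _ _ step (ih (by omega) h2 h0k)
        | arrow =>
          cases h1 : w.mk1 k with
          | arrow => exact comp _ _ step (colliderT k ⟨h0k, hk, h2, h1⟩)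
          | tail => exact absurd ⟨h2, h1, ht⟩ ((hopen.2.2 k h0k hk).1)
  intro k hk
  rcases Nat.eq_zero_or_pos k with h0k | h0k
  · subst h0k
    rw [h0]
    exact ⟨ι a, memA, Relation.ReflTransGen.refl⟩
  rcases eq_or_lt_of_le hk with hkn | hkn
  · subst hkn
    rw [hn]
    exact ⟨ι b, memB, Relation.ReflTransGen.refl⟩
  cases h1 : w.mk1 k with
  | tail => exact right (n - k) k (by omega) (by omega) h1
  | arrow =>
    cases h2 : w.mk2 (k - 1) with
    | tail => exact leftL k hk h2 h0k
    | arrow => exact colliderT k ⟨h0k, hkn, h2, h1⟩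
end

section
/- Let H be a σ-MAG with nodes V and let a, b ∈ V be distinct. If there exists an inducing path between a and b in H, and every inducing path in H between a and b is out of b (its edge incident to b has a tail mark at b), then b ∈ Ant_H(a), i.e., there is an anterior path from b to a in H. -/
variable {V : Type*}

/-- Anterior path from a node to itself (length 0). -/
lemma anterior_refl (G : MixedGraph V) (x : V) : G.AnteriorPath x x := by
  refine ⟨0, ⟨fun _ => x, fun _ => Mark.tail, fun _ => Mark.tail,
    fun i hi => absurd hi (Nat.not_lt_zero i)⟩, ?_, rfl, rfl, ?_⟩
  · intro i j hi hj _; omega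
  · intro i hi; omega

/-- Truncating an anterior-style walk at a vertex `x` gives an anterior path from `x`. -/
lemma anterior_of_shift {G : MixedGraph V} {x y : V} (n i : ℕ) (w : G.Walk n) (hi : i ≤ n)
    (hpath : w.IsPath) (hx : w.vert i = x) (hy : w.vert n = y)
    (ht : ∀ k < n, w.mk1 k = Mark.tail) : G.AnteriorPath x y := by
  refine ⟨n - i, w.shift i (n - i) (by omega), ?_, ?_, ?_, ?_⟩
  · intro p q hp hq h
    have := hpath (i + p) (i + q) (by omega) (by omega) h
    omega
  · show w.vert (i + 0) = x; simpa using hx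
  · show w.vert (i + (n - i)) = y
    rw [show i + (n - i) = n by omega]; exact hy
  · intro k hk
    exact ht (i + k) (by omega)

/-- A directed walk yields an anterior path. -/
lemma anc_anterior {G : MixedGraph V} {x y : V} (h : Relation.ReflTransGen G.dir x y) :
    G.AnteriorPath x y := by
  induction h using Relation.ReflTransGen.head_induction_on with
  | refl => exact anterior_refl G y
  | @head u v huv hvy ih =>
    obtain ⟨n, w, hpath, h0, hn, ht⟩ := ih
    by_cases hu : ∃ i ≤ n, w.vert i = u
    · obtain ⟨i, hi, hvi⟩ := hu
      exact anterior_of_shift n i w hi hpath hvi hn ht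
    · push_neg at hu
      refine ⟨n + 1, ⟨fun k => if k = 0 then u else w.vert (k - 1),
        fun k => if k = 0 then Mark.tail else w.mk1 (k - 1),
        fun k => if k = 0 then Mark.arrow else w.mk2 (k - 1), ?_⟩, ?_, ?_, ?_, ?_⟩
      · intro i hi
        rcases Nat.eq_zero_or_pos i with h0' | h0'
        · subst h0'
          simp only [if_pos rfl, if_neg (Nat.one_ne_zero)]
          show G.EdgeMk u (w.vert 0) Mark.tail Mark.arrow
          rw [h0]; exact huv
        · have hine : i ≠ 0 := by omega
          have hine' : i + 1 ≠ 0 := by omega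
          simp only [if_neg hine, if_neg hine']
          have := w.valid (i - 1) (by omega)
          show G.EdgeMk (w.vert (i - 1)) (w.vert (i + 1 - 1)) (w.mk1 (i - 1)) (w.mk2 (i - 1))
          rw [show i + 1 - 1 = i - 1 + 1 by omega]
          exact this
      · intro i j hi hj hij
        rcases Nat.eq_zero_or_pos i with h0' | h0' <;> rcases Nat.eq_zero_or_pos j with h1' | h1'
        · omega
        · subst h0'
          simp only [if_pos rfl, if_neg (by omega : j ≠ 0)] at hij
          exact absurd hij.symm (hu (j - 1) (by omega))
        · subst h1'
          simp only [if_pos rfl, if_neg (by omega : i ≠ 0)] at hij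
          exact absurd hij (hu (i - 1) (by omega))
        · simp only [if_neg (by omega : i ≠ 0), if_neg (by omega : j ≠ 0)] at hij
          have := hpath (i - 1) (j - 1) (by omega) (by omega) hij
          omega
      · simp
      · simp only [if_neg (by omega : n + 1 ≠ 0)]
        simpa using hn
      · intro i hi
        rcases Nat.eq_zero_or_pos i with h0' | h0'
        · simp [h0']
        · simp only [if_neg (by omega : i ≠ 0)]
          exact ht (i - 1) (by omega)

/-- A single edge with tail at `b` yields an anterior path from `b` to `a`. -/
lemma edge_anterior {G : MixedGraph V} {a b : V} (hne : b ≠ a)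
    (h : G.dir b a ∨ G.undir b a) : G.AnteriorPath b a := by
  obtain ⟨m, hm⟩ : ∃ m, G.EdgeMk b a Mark.tail m := by
    rcases h with h | h
    · exact ⟨Mark.arrow, h⟩
    · exact ⟨Mark.tail, h⟩
  refine ⟨1, ⟨fun k => if k = 0 then b else a, fun _ => Mark.tail, fun _ => m, ?_⟩,
    ?_, rfl, rfl, fun i _ => rfl⟩
  · intro i hi
    have : i = 0 := by omega
    subst this
    simpa using hm
  · intro i j hi hj hij
    interval_cases i <;> interval_cases j <;> simp_all

/-- If there is an inducing path between distinct nodes `a` and `b` of a σ-MAG `H`, and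
every inducing path between `a` and `b` is out of `b` (tail mark at `b`), then there is
an anterior path from `b` to `a` in `H` (i.e. `b ∈ Ant_H(a)`). -/
theorem inducing_all_out_of_b_anterior {V : Type*} (H : MixedGraph V)
    (hH : H.IsSigmaMAG) (a b : V) (hab : a ≠ b)
    (hex : H.InducingPath a b)
    (hout : ∀ (n : ℕ) (w : H.Walk n), w.IsPath → w.vert 0 = a → w.vert n = b →
      w.IsInducing → w.mk2 (n - 1) = Mark.tail) :
    H.AnteriorPath b a := by
  obtain ⟨n, w, hpath, h0, hn, hind⟩ := hex
  have hn1 : 1 ≤ n := by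
    by_contra h
    have : n = 0 := by omega
    subst this
    exact hab (h0 ▸ hn ▸ rfl)
  have htail : w.mk2 (n - 1) = Mark.tail := hout n w hpath h0 hn hind
  rcases eq_or_lt_of_le hn1 with h1 | h2
  · -- n = 1 : single edge with tail at b
    obtain rfl : n = 1 := h1.symm
    have hv := w.valid 0 (by omega)
    rw [h0] at hv
    have hb : w.vert (0 + 1) = b := hn
    rw [hb] at hv
    have ht0 : w.mk2 0 = Mark.tail := htail
    rw [ht0] at hv
    cases hm : w.mk1 0 with
    | tail =>
      rw [hm] at hv
      exact edge_anterior (Ne.symm hab) (Or.inr (H.undir_symm _ _ hv))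
    | arrow =>
      rw [hm] at hv
      exact anc_anterior (Relation.ReflTransGen.single hv)
  · -- n ≥ 2 : last interior node c is a collider, b → c, c ancestor of a
    set c := w.vert (n - 1) with hc
    obtain ⟨hcol, hanc⟩ := hind (n - 1) (by omega) (by omega)
    have hmk1 : w.mk1 (n - 1) = Mark.arrow := hcol.2.2.2
    have hv := w.valid (n - 1) (by omega)
    rw [show n - 1 + 1 = n by omega, hn, hmk1, htail] at hv
    -- hv : EdgeMk c b arrow tail = dir b c
    have hdir : H.dir b c := hv
    have hcb : c ≠ b := by
      intro h
      have := hpath (n - 1) n (by omega) (by omega) (by rw [hn, ← hc]; exact h)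
      omega
    rcases hanc with hca | hcb'
    · rw [h0] at hca
      exact anc_anterior (Relation.ReflTransGen.head hdir hca)
    · exfalso
      rw [hn] at hcb'
      exact hH.ancestral c b (anc_anterior hcb') (Or.inl hdir)
end

section
/- Let H be a σ-MAG with nodes V and let a, b ∈ V be distinct. If there exists an inducing path between a and b in H that is into b (its edge incident to b has an arrowhead at b), and a ∉ Anc_H(b), then there exists an inducing path between a and b in H that is both into a and into b. -/
variable {V : Type*}

/-!
If the given path left `a` along a tail, its first edge would be `a → v₁`: either `v₁ = b`
and the path ends in an arrowhead, or `v₁` is a collider. Ancestrality forbids `v₁ ∈ Anc(a)`,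
so `v₁ ∈ Anc(b)`, whence `a ∈ Anc(b)`, contrary to assumption. So the given path is already
into `a`.
-/

theorem Relation.ReflTransGen.exists_injOn_chain {α : Type*} {r : α → α → Prop} {x y : α}
    (h : Relation.ReflTransGen r x y) :
    ∃ (n : ℕ) (f : ℕ → α), f 0 = x ∧ f n = y ∧ (∀ i < n, r (f i) (f (i + 1))) ∧
      Set.InjOn f (Set.Iic n) := by
  refine h.head_induction_on ⟨0, fun _ => y, rfl, rfl, by omega, fun i hi j hj _ => ?_⟩ ?_
  · simp only [Set.mem_Iic, nonpos_iff_eq_zero] at hi hj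
    rw [hi, hj]
  rintro x z hxz - ⟨n, f, rfl, rfl, hr, hinj⟩
  by_cases hx : ∃ j ≤ n, f j = x
  · -- `x` already lies on the chain: cut the chain at it
    obtain ⟨j, hj, rfl⟩ := hx
    refine ⟨n - j, fun k => f (j + k), by simp, by simp only [Nat.add_sub_cancel' hj],
      fun i hi => ?_, fun i hi i' hi' he => ?_⟩
    · simpa only [← add_assoc] using hr (j + i) (by omega)
    · simp only [Set.mem_Iic] at hi hi'
      have := hinj (show j + i ≤ n by omega) (show j + i' ≤ n by omega) he
      omega
  · push Not at hx
    refine ⟨n + 1, fun k => if k = 0 then x else f (k - 1), by simp, by simp, fun i hi => ?_,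
      fun i hi j hj he => ?_⟩
    · rcases i with _ | i
      · simpa using hxz
      · simpa using hr i (by omega)
    · simp only [Set.mem_Iic] at hi hj
      rcases i with _ | i <;> rcases j with _ | j <;> simp only [if_pos, reduceCtorEq, if_false,
        Nat.add_sub_cancel, add_left_inj] at he ⊢
      · exact hx j (by omega) he.symm
      · exact hx i (by omega) he
      · exact hinj (show i ≤ n by omega) (show j ≤ n by omega) he

namespace MixedGraph

variable {G : MixedGraph V}

theorem Anc.anteriorPath {x y : V} (h : G.Anc x y) : G.AnteriorPath x y := by
  obtain ⟨n, f, rfl, rfl, hdir, hinj⟩ := Relation.ReflTransGen.exists_injOn_chain h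
  exact ⟨n, ⟨f, fun _ => .tail, fun _ => .arrow, hdir⟩, fun i j hi hj => hinj hi hj, rfl, rfl,
    fun _ _ => rfl⟩

def IsAncestral (G : MixedGraph V) : Prop :=
  ∀ a b : V, G.AnteriorPath a b → ¬ G.ArrowAt a b

theorem IsAncestral.not_dir_of_anc (hG : G.IsAncestral) {x y : V} (h : G.Anc y x) :
    ¬ G.dir x y :=
  fun hxy => hG y x h.anteriorPath (Or.inl hxy)

theorem Walk.IsInducing.anc_of_mk1_zero_eq_tail (hG : G.IsAncestral) {n : ℕ} {w : G.Walk n}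
    (hw : w.IsInducing) (hn : 0 < n) (htail : w.mk1 0 = .tail)
    (hinto : w.mk2 (n - 1) = .arrow) : G.Anc (w.vert 0) (w.vert n) := by
  rcases Nat.lt_or_ge 1 n with h1 | h1
  · obtain ⟨⟨-, -, hcol, -⟩, hanc⟩ := hw 1 one_pos h1
    have hdir : G.dir (w.vert 0) (w.vert 1) := by
      simpa [EdgeMk, htail, hcol] using w.valid 0 hn
    rcases hanc with hanc | hanc
    · exact absurd hdir (hG.not_dir_of_anc hanc)
    · exact .head hdir hanc
  · obtain rfl : n = 1 := by omega
    have hdir : G.dir (w.vert 0) (w.vert 1) := by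
      simpa [EdgeMk, htail, hinto] using w.valid 0 hn
    exact .single hdir

end MixedGraph

theorem inducing_into_b_exists_into_both_general {V : Type*} (H : MixedGraph V)
    (hH : H.IsSigmaMAG) (a b : V)
    (hex : ∃ (n : ℕ) (w : H.Walk n), w.IsPath ∧ w.vert 0 = a ∧ w.vert n = b ∧
      w.IsInducing ∧ w.mk2 (n - 1) = Mark.arrow)
    (hanc : ¬ H.Anc a b) :
    ∃ (n : ℕ) (w : H.Walk n), w.IsPath ∧ w.vert 0 = a ∧ w.vert n = b ∧
      w.IsInducing ∧ w.mk1 0 = Mark.arrow ∧ w.mk2 (n - 1) = Mark.arrow := by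
  obtain ⟨n, w, hpath, rfl, rfl, hind, hinto⟩ := hex
  have hn : 0 < n := Nat.pos_of_ne_zero fun h => hanc (h ▸ .refl)
  cases hfirst : w.mk1 0 with
  | tail => exact absurd (hind.anc_of_mk1_zero_eq_tail hH.ancestral hn hfirst hinto) hanc
  | arrow => exact ⟨n, w, hpath, rfl, rfl, hind, hfirst, hinto⟩

/-- If there is an inducing path between distinct nodes `a` and `b` of a σ-MAG `H` that
is into `b` (arrowhead at `b`), and `a ∉ Anc_H(b)`, then there is an inducing path
between `a` and `b` that is both into `a` and into `b`. -/
theorem inducing_into_b_exists_into_both {V : Type*} (H : MixedGraph V)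
    (hH : H.IsSigmaMAG) (a b : V) (hab : a ≠ b)
    (hex : ∃ (n : ℕ) (w : H.Walk n), w.IsPath ∧ w.vert 0 = a ∧ w.vert n = b ∧
      w.IsInducing ∧ w.mk2 (n - 1) = Mark.arrow)
    (hanc : ¬ H.Anc a b) :
    ∃ (n : ℕ) (w : H.Walk n), w.IsPath ∧ w.vert 0 = a ∧ w.vert n = b ∧
      w.IsInducing ∧ w.mk1 0 = Mark.arrow ∧ w.mk2 (n - 1) = Mark.arrow :=
  inducing_into_b_exists_into_both_general H hH a b hex hanc
end

section
/- Let H be a σ-MAG with nodes V and let π = (a, v0, …, vn, b, c) be a discriminating path for b in H. Then: (1) if b is a collider on π, then for every Z ⊆ V \ {a, c} such that a is m-separated from c given Z in H, we have b ∉ Z; (2) if b is a non-collider on π, then for every Z ⊆ V \ {a, c} such that a is m-separated from c given Z in H, we have b ∈ Z. -/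
variable {V : Type*}

section AuxDiscr

variable {H : MixedGraph V}

/-- The walk following `w` up to position `k` and then jumping directly to `w.vert n`
along a directed edge. -/
def MixedGraph.Walk.trunc {n : ℕ} (w : H.Walk n) (k : ℕ) (hk : k < n)
    (hd : H.dir (w.vert k) (w.vert n)) : H.Walk (k + 1) where
  vert i := if i ≤ k then w.vert i else w.vert n
  mk1 i := if i < k then w.mk1 i else Mark.tail
  mk2 i := if i < k then w.mk2 i else Mark.arrow
  valid i hi := by
    beta_reduce
    by_cases h : i < k
    · rw [if_pos (Nat.le_of_lt h), if_pos (Nat.succ_le_of_lt h), if_pos h, if_pos h]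
      exact w.valid i (by omega)
    · have hik : i = k := by omega
      subst hik
      rw [if_pos (le_refl i), if_neg (by omega : ¬ i + 1 ≤ i), if_neg h, if_neg h]
      exact hd

lemma anterior_two (hH : H.IsSigmaMAG) {x y z : V}
    (hxy : x ≠ y) (hxz : x ≠ z) (hyz : y ≠ z)
    (h1 : H.dir x y) (h2 : H.undir y z) : ¬ H.ArrowAt x z := by
  apply hH.ancestral x z
  refine ⟨2, ⟨fun i => if i = 0 then x else if i = 1 then y else z,
    fun _ => Mark.tail, fun i => if i = 0 then Mark.arrow else Mark.tail, ?_⟩,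
    ?_, by simp, by simp, fun i _ => rfl⟩
  · intro i hi
    interval_cases i
    · show H.EdgeMk x y Mark.tail Mark.arrow
      exact h1
    · show H.EdgeMk y z Mark.tail Mark.tail
      exact h2
  · intro i j hi hj hij
    interval_cases i <;> interval_cases j <;> simp_all

/-- All interior colliders of a discriminating path must lie in any separating set. -/
lemma interior_mem_of_msep {n : ℕ} {w : H.Walk n}
    (hdisc : w.IsDiscriminating) {Z : Set V} (ha : w.vert 0 ∉ Z) (hc : w.vert n ∉ Z)
    (hsep : H.MSep {w.vert 0} {w.vert n} Z) :
    ∀ k, 0 < k → k < n - 1 → w.vert k ∈ Z := by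
  obtain ⟨hn3, hpath, hnadj, hcol⟩ := hdisc
  intro k
  induction k using Nat.strong_induction_on with
  | _ k IH =>
    intro hk0 hkn
    by_contra hkZ
    have hd : H.dir (w.vert k) (w.vert n) := (hcol k hk0 hkn).2
    set w' : H.Walk (k + 1) := w.trunc k (by omega) hd with hw'
    have hv : ∀ i ≤ k, w'.vert i = w.vert i := fun i hi => if_pos hi
    have hvtop : w'.vert (k + 1) = w.vert n := if_neg (by omega)
    have hm1 : ∀ i < k, w'.mk1 i = w.mk1 i := fun i hi => if_pos hi
    have hm2 : ∀ i < k, w'.mk2 i = w.mk2 i := fun i hi => if_pos hi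
    have hm1k : w'.mk1 k = Mark.tail := if_neg (lt_irrefl k)
    have hm2k : w'.mk2 k = Mark.arrow := if_neg (lt_irrefl k)
    refine hsep (k + 1) w' (by rw [hv 0 (by omega)]; exact rfl)
      (by rw [hvtop]; exact rfl) ⟨?_, ?_, ?_⟩
    · -- non-colliders are outside Z
      intro j hj hnc
      rcases Nat.lt_or_ge j 1 with h0 | h1
      · have : j = 0 := by omega
        subst this
        rw [hv 0 (by omega)]; exact ha
      rcases Nat.lt_or_ge j k with hjk | hjk
      · exfalso
        apply hnc
        have hcj := (hcol j (by omega) (by omega)).1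
        refine ⟨by omega, by omega, ?_, ?_⟩
        · rw [hm2 (j - 1) (by omega)]; exact hcj.2.2.1
        · rw [hm1 j hjk]; exact hcj.2.2.2
      rcases Nat.lt_or_ge j (k + 1) with hjk1 | hjk1
      · have : j = k := by omega
        subst this
        rw [hv j (le_refl j)]; exact hkZ
      · have : j = k + 1 := by omega
        subst this
        rw [hvtop]; exact hc
    · -- colliders are ancestors of Z
      intro j hcj
      obtain ⟨hj0, hjk1, hjm2, hjm1⟩ := hcj
      have hjk : j < k := by
        rcases Nat.lt_or_ge j k with h | h
        · exact h
        · exfalso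
          have : j = k := by omega
          subst this
          rw [hm1k] at hjm1
          exact Mark.noConfusion hjm1
      rw [hv j (by omega)]
      exact ⟨w.vert j, IH j hjk (by omega) (by omega), Relation.ReflTransGen.refl⟩
    · -- no blocking patterns
      intro j hj0 hjk1
      rcases Nat.lt_or_ge j k with hjk | hjk
      · constructor
        · rintro ⟨-, h2, -⟩
          rw [hm1 j hjk, (hcol j (by omega) (by omega)).1.2.2.2] at h2
          exact Mark.noConfusion h2
        · rintro ⟨-, h2, -⟩
          rw [hm2 (j - 1) (by omega), (hcol j (by omega) (by omega)).1.2.2.1] at h2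
          exact Mark.noConfusion h2
      · have : j = k := by omega
        subst this
        constructor
        · rintro ⟨-, -, h3⟩
          rw [hm2k] at h3
          exact Mark.noConfusion h3
        · rintro ⟨-, h2, -⟩
          rw [hm2 (j - 1) (by omega), (hcol j (by omega) (by omega)).1.2.2.1] at h2
          exact Mark.noConfusion h2

end AuxDiscr

/-- Let `w` be a discriminating path (from `a = vert 0` to `c = vert n`) for
`b = vert (n-1)` in a σ-MAG `H`. If `b` is a collider on `w`, then every
`Z ⊆ V \ {a, c}` m-separating `a` from `c` avoids `b`; if `b` is a non-collider on `w`,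
then every such `Z` contains `b`. -/
theorem discriminating_path_blocking {V : Type*} (H : MixedGraph V)
    (hH : H.IsSigmaMAG) (n : ℕ) (w : H.Walk n) (hdisc : w.IsDiscriminating) :
    (w.IsCollider (n - 1) →
      ∀ Z : Set V, w.vert 0 ∉ Z → w.vert n ∉ Z →
        H.MSep {w.vert 0} {w.vert n} Z → w.vert (n - 1) ∉ Z) ∧
    (¬ w.IsCollider (n - 1) →
      ∀ Z : Set V, w.vert 0 ∉ Z → w.vert n ∉ Z →
        H.MSep {w.vert 0} {w.vert n} Z → w.vert (n - 1) ∈ Z) := by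
  obtain ⟨hn3, hpath, hnadj, hcol⟩ := hdisc
  have hdisc' : w.IsDiscriminating := ⟨hn3, hpath, hnadj, hcol⟩
  constructor
  · -- b is a collider
    rintro ⟨-, -, hbm2, hbm1⟩ Z ha hc hsep hbZ
    have hint := interior_mem_of_msep hdisc' ha hc hsep
    refine hsep n w rfl rfl ⟨?_, ?_, ?_⟩
    · intro j hj hnc
      rcases Nat.lt_or_ge j 1 with h0 | h1
      · have : j = 0 := by omega
        subst this; exact ha
      rcases Nat.lt_or_ge j (n - 1) with hjn | hjn
      · exact absurd (hcol j (by omega) hjn).1 hnc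
      rcases Nat.lt_or_ge j n with hjn2 | hjn2
      · have : j = n - 1 := by omega
        subst this
        exact absurd ⟨by omega, by omega, hbm2, hbm1⟩ hnc
      · have : j = n := by omega
        subst this; exact hc
    · intro j hcj
      obtain ⟨hj0, hjn, -, -⟩ := hcj
      rcases Nat.lt_or_ge j (n - 1) with h | h
      · exact ⟨w.vert j, hint j hj0 h, Relation.ReflTransGen.refl⟩
      · have : j = n - 1 := by omega
        subst this
        exact ⟨w.vert (n - 1), hbZ, Relation.ReflTransGen.refl⟩
    · intro j hj0 hjn
      rcases Nat.lt_or_ge j (n - 1) with h | h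
      · have hcj := (hcol j hj0 h).1
        constructor
        · rintro ⟨-, h2, -⟩
          rw [hcj.2.2.2] at h2; exact Mark.noConfusion h2
        · rintro ⟨-, h2, -⟩
          rw [hcj.2.2.1] at h2; exact Mark.noConfusion h2
      · have : j = n - 1 := by omega
        subst this
        constructor
        · rintro ⟨-, h2, -⟩
          rw [hbm1] at h2; exact Mark.noConfusion h2
        · rintro ⟨-, h2, -⟩
          rw [hbm2] at h2; exact Mark.noConfusion h2
  · -- b is a non-collider
    intro hncb Z ha hc hsep
    by_contra hbZ
    have hint := interior_mem_of_msep hdisc' ha hc hsep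
    have hcn2 := hcol (n - 2) (by omega) (by omega)
    refine hsep n w rfl rfl ⟨?_, ?_, ?_⟩
    · intro j hj hnc
      rcases Nat.lt_or_ge j 1 with h0 | h1
      · have : j = 0 := by omega
        subst this; exact ha
      rcases Nat.lt_or_ge j (n - 1) with hjn | hjn
      · exact absurd (hcol j (by omega) hjn).1 hnc
      rcases Nat.lt_or_ge j n with hjn2 | hjn2
      · have : j = n - 1 := by omega
        subst this; exact hbZ
      · have : j = n := by omega
        subst this; exact hc
    · intro j hcj
      obtain ⟨hj0, hjn, hc2, hc1⟩ := hcj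
      rcases Nat.lt_or_ge j (n - 1) with h | h
      · exact ⟨w.vert j, hint j hj0 h, Relation.ReflTransGen.refl⟩
      · exfalso
        have : j = n - 1 := by omega
        subst this
        exact hncb ⟨hj0, hjn, hc2, hc1⟩
    · intro j hj0 hjn
      rcases Nat.lt_or_ge j (n - 1) with h | h
      · have hcj := (hcol j hj0 h).1
        constructor
        · rintro ⟨-, h2, -⟩
          rw [hcj.2.2.2] at h2; exact Mark.noConfusion h2
        · rintro ⟨-, h2, -⟩
          rw [hcj.2.2.1] at h2; exact Mark.noConfusion h2
      · have hjeq : j = n - 1 := by omega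
        subst hjeq
        constructor
        · -- pattern `v_{n-2} ∗→ b — c` is impossible by ancestrality
          rintro ⟨h1, h2, h3⟩
          -- the edge from v_{n-2} to b is bidirected
          have hm1n2 : w.mk1 (n - 2) = Mark.arrow := hcn2.1.2.2.2
          have he1 := w.valid (n - 2) (by omega)
          have he2 := w.valid (n - 1) (by omega)
          have hrw1 : n - 2 + 1 = n - 1 := by omega
          have hrw2 : n - 1 + 1 = n := by omega
          rw [hrw1] at he1
          rw [hrw2] at he2
          have hjrw : n - 1 - 1 = n - 2 := by omega
          rw [hjrw] at h1
          rw [hm1n2, h1] at he1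
          rw [h2, h3] at he2
          -- he1 : bidir (v_{n-2}) b, he2 : undir b c
          have he1' : H.bidir (w.vert (n - 2)) (w.vert (n - 1)) := he1
          have he2' : H.undir (w.vert (n - 1)) (w.vert n) := he2
          have hund : H.undir (w.vert n) (w.vert (n - 1)) := H.undir_symm _ _ he2'
          have hne1 : w.vert (n - 2) ≠ w.vert n := fun h =>
            by have := hpath (n - 2) n (by omega) (le_refl n) h; omega
          have hne2 : w.vert (n - 2) ≠ w.vert (n - 1) := fun h =>
            by have := hpath (n - 2) (n - 1) (by omega) (by omega) h; omega
          have hne3 : w.vert n ≠ w.vert (n - 1) := fun h =>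
            by have := hpath n (n - 1) (le_refl n) (by omega) h; omega
          exact anterior_two hH hne1 hne2 hne3 hcn2.2 hund (Or.inr he1')
        · rintro ⟨h1, -, -⟩
          have hjrw : n - 1 - 1 = n - 2 := by omega
          rw [hjrw, hcn2.1.2.2.2] at h1
          exact Mark.noConfusion h1
end

section
/- Let H1 and H2 be two σ-MAGs with the same node set V. If H1 and H2 are m-Markov equivalent, then they satisfy Condition 1: (1) they have the same adjacencies; (2) they have the same unshielded colliders; (3) whenever a path π is a discriminating path for a node v in H1 and the corresponding path π' (with the same node sequence) in H2 is also a discriminating path for v, then v is a collider on π if and only if v is a collider on π'. -/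
variable {V : Type*}

/-!
Everything is read off from separating sets. The key fact is that in a σ-MAG two distinct
non-adjacent nodes `a`, `b` are m-separated by `sepSet a b`, the set of the other nodes from
which `a` or `b` is reached by a directed walk or by an undirected walk; σ-completeness makes
this set closed under ancestors. A shortest m-open walk from `a` to `b` then has no undirected
edges, only colliders as interior nodes, and no repeated nodes. Along such a collider path,
σ-completeness and ancestrality exclude undirected walks from interior nodes to `a` or `b`, so
the path is inducing, contradicting maximality.

With separators at hand: an edge of `H₁` between nodes non-adjacent in `H₂` would be an m-open
walk; the middle node of an unshielded collider lies outside every separator of its ends, which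
forces its arrowheads in `H₂`; and a separator of the ends of a discriminating path contains the
colliders before the discriminated node, and contains that node iff it is a non-collider.
-/

theorem Relation.ReflTransGen.exists_injective_chain {α : Type*} {r : α → α → Prop} {a b : α}
    (h : Relation.ReflTransGen r a b) :
    ∃ (n : ℕ) (f : ℕ → α), f 0 = a ∧ f n = b ∧ (∀ i < n, r (f i) (f (i + 1))) ∧
      ∀ i j, i ≤ n → j ≤ n → f i = f j → i = j := by
  induction h using Relation.ReflTransGen.head_induction_on with
  | refl => exact ⟨0, fun _ => b, rfl, rfl, by simp, by omega⟩
  | @head a x hax _ ih =>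
    obtain ⟨n, f, hf0, hfn, hr, hinj⟩ := ih
    by_cases ha : ∃ i ≤ n, f i = a
    · obtain ⟨i, hi, hfi⟩ := ha
      refine ⟨n - i, fun k => f (i + k), hfi, by simp only [Nat.add_sub_cancel' hi, hfn],
        fun k hk => hr (i + k) (by omega), fun k l hk hl h => ?_⟩
      have := hinj _ _ (by omega) (by omega) h
      omega
    · push Not at ha
      refine ⟨n + 1, fun k => Nat.casesOn k a f, rfl, hfn, ?_, ?_⟩
      · rintro (_ | k) hk
        · simpa [hf0] using hax
        · exact hr k (by omega)
      · rintro (_ | i) (_ | j) hi hj h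
        · rfl
        · exact absurd h.symm (ha j (by omega))
        · exact absurd h (ha i (by omega))
        · simp only at h
          rw [hinj i j (by omega) (by omega) h]

theorem MMarkovEquiv.symm {H₁ H₂ : MixedGraph V} (h : MMarkovEquiv H₁ H₂) : MMarkovEquiv H₂ H₁ :=
  fun X Y Z => (h X Y Z).symm

namespace MixedGraph

variable {G : MixedGraph V} {a b c d x y z : V} {m₁ m₂ : Mark}

theorem Adj.symm (h : G.Adj x y) : G.Adj y x := by
  rcases h with h | h | h | h
  exacts [Or.inr (Or.inl h), Or.inl h, Or.inr (Or.inr (Or.inl (G.bidir_symm _ _ h))),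
    Or.inr (Or.inr (Or.inr (G.undir_symm _ _ h)))]

theorem EdgeMk.adj (h : G.EdgeMk x y m₁ m₂) : G.Adj x y := by
  cases m₁ <;> cases m₂
  exacts [Or.inr (Or.inr (Or.inr h)), Or.inl h, Or.inr (Or.inl h), Or.inr (Or.inr (Or.inl h))]

theorem Adj.exists_edgeMk (h : G.Adj x y) : ∃ m₁ m₂, G.EdgeMk x y m₁ m₂ := by
  rcases h with h | h | h | h
  exacts [⟨.tail, .arrow, h⟩, ⟨.arrow, .tail, h⟩, ⟨.arrow, .arrow, h⟩, ⟨.tail, .tail, h⟩]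

theorem arrowAt_iff_exists_edgeMk : G.ArrowAt x y ↔ ∃ m, G.EdgeMk y x m .arrow := by
  constructor
  · rintro (h | h)
    exacts [⟨.tail, h⟩, ⟨.arrow, G.bidir_symm _ _ h⟩]
  · rintro ⟨m, h⟩
    cases m
    exacts [Or.inl h, Or.inr (G.bidir_symm _ _ h)]

theorem arrowAt_of_edgeMk (h : G.EdgeMk y x m₁ .arrow) : G.ArrowAt x y :=
  arrowAt_iff_exists_edgeMk.2 ⟨m₁, h⟩

theorem ArrowAt.adj (h : G.ArrowAt x y) : G.Adj x y :=
  (arrowAt_iff_exists_edgeMk.1 h).elim fun _ h => h.adj.symm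

theorem IsSigmaMAG.not_adj_self (hG : G.IsSigmaMAG) : ¬ G.Adj x x := by
  rintro (h | h | h | h)
  exacts [(hG.no_self x).1 h, (hG.no_self x).1 h, (hG.no_self x).2.1 h, (hG.no_self x).2.2 h]

def Anterior (G : MixedGraph V) (a b : V) : Prop :=
  Relation.ReflTransGen G.TailAt a b

theorem Anterior.anteriorPath (h : G.Anterior a b) : G.AnteriorPath a b := by
  classical
  obtain ⟨n, f, hf0, hfn, hr, hinj⟩ := h.exists_injective_chain
  refine ⟨n, ⟨f, fun _ => .tail, fun i => if G.dir (f i) (f (i + 1)) then .arrow else .tail,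
    fun i hi => ?_⟩, hinj, hf0, hfn, fun _ _ => rfl⟩
  by_cases hd : G.dir (f i) (f (i + 1))
  · simp [EdgeMk, hd]
  · simpa [EdgeMk, hd] using (hr i hi).resolve_left hd

theorem IsSigmaMAG.not_arrowAt_of_anterior (hG : G.IsSigmaMAG) (h : G.Anterior a b) :
    ¬ G.ArrowAt a b := by
  by_cases hab : a = b
  · subst hab
    rintro (h | h)
    exacts [(hG.no_self a).1 h, (hG.no_self a).2.1 h]
  · exact hG.ancestral a b h.anteriorPath

inductive UndirChain (G : MixedGraph V) : ℕ → V → V → Prop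
  | refl (a : V) : UndirChain G 0 a a
  | cons {m : ℕ} {a b c : V} : G.undir a b → UndirChain G m b c → UndirChain G (m + 1) a c

theorem UndirChain.anterior {m : ℕ} (h : G.UndirChain m a b) : G.Anterior a b := by
  induction h with
  | refl => exact .refl
  | cons hab _ ih => exact .head (Or.inr hab) ih

theorem undirChain_zero_iff : G.UndirChain 0 a b ↔ a = b :=
  ⟨fun h => by cases h; rfl, fun h => h ▸ .refl a⟩

theorem UndirChain.exists_cons {m : ℕ} (h : G.UndirChain (m + 1) a c) :
    ∃ b, G.undir a b ∧ G.UndirChain m b c := by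
  cases h
  exact ⟨_, ‹_›, ‹_›⟩

def Reach (G : MixedGraph V) (a b : V) : Prop :=
  G.Anc a b ∨ ∃ m, G.UndirChain m a b

theorem IsSigmaMAG.anc_or_undirChain_of_anc_of_undirChain (hG : G.IsSigmaMAG) {m : ℕ}
    (hab : G.Anc a b) (hbc : G.UndirChain m b c) : G.Anc a c ∨ ∃ k ≤ m, G.UndirChain k a c := by
  induction m using Nat.strong_induction_on generalizing a b with
  | _ m ihm =>
  induction hab using Relation.ReflTransGen.head_induction_on with
  | refl => exact Or.inr ⟨m, le_rfl, hbc⟩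
  | @head a d had _ ih =>
    obtain hdc | ⟨_ | k, hk, hdc⟩ := ih
    · exact Or.inl (.head had hdc)
    · rw [← undirChain_zero_iff.1 hdc]
      exact Or.inl (.single had)
    · obtain ⟨u, hdu, huc⟩ := hdc.exists_cons
      have hanterior : G.Anterior a u := .head (Or.inl had) (.single (Or.inr hdu))
      rcases hG.sigma_complete₁ a d u (Or.inl had) hdu with hau | hua | hau | hau
      · rcases ihm k (by omega) (.single hau) huc with h | ⟨l, hl, h⟩
        exacts [Or.inl h, Or.inr ⟨l, by omega, h⟩]
      · exact absurd (Or.inl hua) (hG.not_arrowAt_of_anterior hanterior)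
      · exact absurd (Or.inr hau) (hG.not_arrowAt_of_anterior hanterior)
      · exact Or.inr ⟨k + 1, hk, .cons hau huc⟩

theorem IsSigmaMAG.reach_of_anc_of_reach (hG : G.IsSigmaMAG) (hab : G.Anc a b)
    (hbc : G.Reach b c) : G.Reach a c := by
  rcases hbc with hbc | ⟨m, hbc⟩
  · exact Or.inl (hab.trans hbc)
  · exact (hG.anc_or_undirChain_of_anc_of_undirChain hab hbc).imp_right fun ⟨k, _, h⟩ => ⟨k, h⟩

def sepSet (G : MixedGraph V) (a b : V) : Set V :=
  {v | v ≠ a ∧ v ≠ b ∧ (G.Reach v a ∨ G.Reach v b)}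

theorem sepSet_comm (a b : V) : G.sepSet a b = G.sepSet b a := by
  ext v
  simp only [sepSet, Set.mem_ofPred_eq]
  tauto

theorem IsSigmaMAG.reach_of_ancS_sepSet (hG : G.IsSigmaMAG) (h : G.AncS x (G.sepSet a b)) :
    G.Reach x a ∨ G.Reach x b := by
  obtain ⟨z, ⟨-, -, hz⟩, hxz⟩ := h
  exact hz.imp (hG.reach_of_anc_of_reach hxz) (hG.reach_of_anc_of_reach hxz)

theorem IsSigmaMAG.undir_of_adj_of_anterior (hG : G.IsSigmaMAG) (hxy : G.Adj x y)
    (hx : G.Anterior x y) (hy : G.Anterior y x) : G.undir x y := by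
  rcases hxy with h | h | h | h
  · exact absurd (Or.inl h) (hG.not_arrowAt_of_anterior hy)
  · exact absurd (Or.inl h) (hG.not_arrowAt_of_anterior hx)
  · exact absurd (Or.inr h) (hG.not_arrowAt_of_anterior hx)
  · exact h

theorem IsSigmaMAG.undir_of_undir_of_undir (hG : G.IsSigmaMAG) (hba : G.ArrowAt b a)
    (hbc : G.undir b c) (hbd : G.undir b d) (hcd : c ≠ d) : G.undir c d :=
  hG.undir_of_adj_of_anterior (hG.sigma_complete₂ a b c d hba hbc hbd hcd)
    (.head (Or.inr (G.undir_symm _ _ hbc)) (.single (Or.inr hbd)))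
    (.head (Or.inr (G.undir_symm _ _ hbd)) (.single (Or.inr hbc)))

theorem IsSigmaMAG.bidir_or_undir_of_undir (hG : G.IsSigmaMAG) (hxy : G.ArrowAt x y)
    (hyx : G.ArrowAt y x) (hxz : G.undir x z) : G.bidir y z ∨ G.undir y z := by
  rcases hG.sigma_complete₁ y x z hxy hxz with h | h | h | h
  · exact absurd hyx (hG.not_arrowAt_of_anterior (.head (Or.inl h)
      (.single (Or.inr (G.undir_symm _ _ hxz)))))
  · exact absurd hxy (hG.not_arrowAt_of_anterior (.head (Or.inr hxz) (.single (Or.inl h))))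
  · exact Or.inl h
  · exact Or.inr h

namespace Walk

variable {n k : ℕ} {w : G.Walk n} {Z : Set V}

theorem IsCollider.arrowAt_pred (h : w.IsCollider k) :
    G.ArrowAt (w.vert k) (w.vert (k - 1)) := by
  obtain ⟨hk, hkn, h₂, -⟩ := h
  have e := w.valid (k - 1) (by omega)
  rw [h₂, Nat.sub_add_cancel hk] at e
  exact arrowAt_of_edgeMk e

theorem IsCollider.arrowAt_succ (h : w.IsCollider k) :
    G.ArrowAt (w.vert k) (w.vert (k + 1)) := by
  obtain ⟨-, hk, -, h₁⟩ := h
  have e := w.valid k hk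
  rw [h₁] at e
  exact arrowAt_of_edgeMk (edgeMk_symm e)

@[simp] theorem reverse_vert (k : ℕ) : w.reverse.vert k = w.vert (n - k) := rfl

theorem IsPath.reverse (h : w.IsPath) : w.reverse.IsPath := by
  intro i j hi hj hij
  have := h _ _ (Nat.sub_le n i) (Nat.sub_le n j) hij
  omega

theorem isCollider_reverse : w.reverse.IsCollider k ↔ w.IsCollider (n - k) := by
  simp only [IsCollider, reverse]
  constructor
  · rintro ⟨h0, hn, h₂, h₁⟩
    refine ⟨by omega, by omega, ?_, ?_⟩
    · rwa [show n - k - 1 = n - 1 - k by omega]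
    · rwa [show n - k = n - 1 - (k - 1) by omega]
  · rintro ⟨h0, hn, h₂, h₁⟩
    refine ⟨by omega, by omega, ?_, ?_⟩
    · rwa [show n - 1 - (k - 1) = n - k by omega]
    · rwa [show n - 1 - k = n - k - 1 by omega]

def shortcut (w : G.Walk n) (k : ℕ) (hk : k < n) (e : G.EdgeMk (w.vert k) (w.vert n) m₁ m₂) :
    G.Walk (k + 1) where
  vert j := if j ≤ k then w.vert j else w.vert n
  mk1 j := if j < k then w.mk1 j else m₁
  mk2 j := if j < k then w.mk2 j else m₂
  valid j hj := by
    by_cases hjk : j < k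
    · simpa [hjk, Nat.le_of_lt hjk, Nat.succ_le_of_lt hjk] using w.valid j (by omega)
    · obtain rfl : j = k := by omega
      simpa using e

section

variable {hk : k < n} {e : G.EdgeMk (w.vert k) (w.vert n) m₁ m₂}

@[simp] theorem shortcut_vert_zero : (w.shortcut k hk e).vert 0 = w.vert 0 := by
  simp [shortcut]

@[simp] theorem shortcut_vert_last : (w.shortcut k hk e).vert (k + 1) = w.vert n := by
  simp [shortcut]

theorem shortcut_vert_of_le {j : ℕ} (hj : j ≤ k) : (w.shortcut k hk e).vert j = w.vert j := by
  simp [shortcut, hj]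

theorem isCollider_shortcut_of_lt {j : ℕ} (hj : j < k) :
    (w.shortcut k hk e).IsCollider j ↔ w.IsCollider j := by
  simp only [IsCollider, shortcut]
  constructor
  · rintro ⟨h0, -, h₂, h₁⟩
    exact ⟨h0, by omega, by simpa [show j - 1 < k by omega] using h₂, by simpa [hj] using h₁⟩
  · rintro ⟨h0, -, h₂, h₁⟩
    exact ⟨h0, by omega, by simpa [show j - 1 < k by omega] using h₂, by simpa [hj] using h₁⟩

theorem IsPath.shortcut (hw : w.IsPath) : (w.shortcut k hk e).IsPath := by
  intro i j hi hj hij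
  simp only [Walk.shortcut] at hij
  split_ifs at hij with h₁ h₂ h₂
  · exact hw i j (by omega) (by omega) hij
  · have := hw i n (by omega) le_rfl hij; omega
  · have := hw n j le_rfl (by omega) hij; omega
  · omega

end

def IsColliderPath (w : G.Walk n) (Z : Set V) : Prop :=
  w.IsPath ∧ ∀ k, 0 < k → k < n → w.IsCollider k ∧ w.vert k ∈ Z

theorem IsColliderPath.reverse (hw : w.IsColliderPath Z) : w.reverse.IsColliderPath Z :=
  ⟨hw.1.reverse, fun k hk hkn => ⟨isCollider_reverse.2 (hw.2 (n - k) (by omega) (by omega)).1,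
    (hw.2 (n - k) (by omega) (by omega)).2⟩⟩

theorem IsColliderPath.shortcut {m₂ : Mark} (hw : w.IsColliderPath Z) (hk : 0 < k)
    (hkn : k < n) (e : G.EdgeMk (w.vert k) (w.vert n) .arrow m₂) :
    (w.shortcut k hkn e).IsColliderPath Z := by
  refine ⟨hw.1.shortcut, fun j hj hjk => ⟨?_, ?_⟩⟩
  · rcases Nat.lt_or_ge j k with hjk' | hjk'
    · exact (isCollider_shortcut_of_lt hjk').2 (hw.2 j hj (by omega)).1
    · obtain rfl : j = k := by omega
      refine ⟨hj, hjk, ?_, by simp [Walk.shortcut]⟩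
      simpa [Walk.shortcut, show j - 1 < j by omega] using (hw.2 j hj hkn).1.2.2.1
  · rw [shortcut_vert_of_le (by omega)]
    exact (hw.2 j hj (by omega)).2

/-- At a non-collider, the m-blocking conditions say: `vert k ∉ Z`, and an arrowhead into
`vert k` continues as a directed edge out of `vert k` (this excludes `∗→ vert k —` and
`— vert k ←∗`). -/
def OpenAt (w : G.Walk n) (Z : Set V) (k : ℕ) : Prop :=
  (w.mk2 (k - 1) = .arrow ∧ w.mk1 k = .arrow ∧ G.AncS (w.vert k) Z) ∨
  (w.vert k ∉ Z ∧ (w.mk2 (k - 1) = .arrow → w.mk1 k = .tail ∧ w.mk2 k = .arrow) ∧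
    (w.mk1 k = .arrow → w.mk2 (k - 1) = .tail ∧ w.mk1 (k - 1) = .arrow))

theorem mOpen_iff : w.MOpen Z ↔
    w.vert 0 ∉ Z ∧ w.vert n ∉ Z ∧ ∀ k, 0 < k → k < n → w.OpenAt Z k := by
  constructor
  · rintro ⟨hnc, hc, hpat⟩
    refine ⟨hnc 0 (Nat.zero_le n) fun h => absurd h.1 (lt_irrefl 0),
      hnc n le_rfl fun h => absurd h.2.1 (lt_irrefl n), fun k hk hkn => ?_⟩
    by_cases hck : w.IsCollider k
    · exact Or.inl ⟨hck.2.2.1, hck.2.2.2, hc k hck⟩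
    · have hp := hpat k hk hkn
      simp only [IsCollider, not_and] at hck hp
      refine Or.inr ⟨hnc k hkn.le (by simpa [IsCollider, hk, hkn] using hck), ?_, ?_⟩ <;>
        cases h₁ : w.mk1 (k - 1) <;> cases h₂ : w.mk2 (k - 1) <;> cases h₃ : w.mk1 k <;>
        cases h₄ : w.mk2 k <;> simp_all
  · rintro ⟨h0, hn, hopen⟩
    refine ⟨fun k hk hnc => ?_, fun k hck => ?_, fun k hk hkn => ?_⟩
    · rcases Nat.eq_zero_or_pos k with rfl | hk0
      · exact h0
      rcases hk.lt_or_eq with hkn | rfl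
      · rcases hopen k hk0 hkn with h | h
        · exact absurd ⟨hk0, hkn, h.1, h.2.1⟩ hnc
        · exact h.1
      · exact hn
    · rcases hopen k hck.1 hck.2.1 with h | h
      · exact h.2.2
      · simp [hck.2.2.1, hck.2.2.2] at h
    · rcases hopen k hk hkn with h | ⟨-, h₁, h₂⟩ <;> constructor <;> rintro ⟨ha, hb, hc⟩
      all_goals simp_all

theorem anc_or_ancS_of_forward_dir (hopen : ∀ k, 0 < k → k < n → w.OpenAt Z k) {j : ℕ}
    (hj : j < n) (h₁ : w.mk1 j = .tail) (h₂ : w.mk2 j = .arrow) :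
    G.Anc (w.vert j) (w.vert n) ∨ G.AncS (w.vert j) Z := by
  obtain ⟨d, hd⟩ : ∃ d, n = j + 1 + d := ⟨n - (j + 1), by omega⟩
  have hdir : G.dir (w.vert j) (w.vert (j + 1)) := by
    simpa [h₁, h₂, EdgeMk] using w.valid j hj
  induction d generalizing j with
  | zero => exact Or.inl (.single (by rwa [show j + 1 = n by omega] at hdir))
  | succ d ih =>
    rcases hopen (j + 1) (by omega) (by omega) with ⟨-, -, z, hz, hanc⟩ | ⟨-, hnext, -⟩
    · exact Or.inr ⟨z, hz, .head hdir hanc⟩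
    · obtain ⟨h₁', h₂'⟩ := hnext (by simpa using h₂)
      have hdir' : G.dir (w.vert (j + 1)) (w.vert (j + 1 + 1)) := by
        simpa [h₁', h₂', EdgeMk] using w.valid (j + 1) (by omega)
      rcases ih (by omega) h₁' h₂' (by omega) hdir' with h | ⟨z, hz, hanc⟩
      · exact Or.inl (.head hdir h)
      · exact Or.inr ⟨z, hz, .head hdir hanc⟩

theorem anc_or_ancS_of_backward_dir (hopen : ∀ k, 0 < k → k < n → w.OpenAt Z k)
    {j : ℕ} (hj : j < n) (h₁ : w.mk1 j = .arrow) (h₂ : w.mk2 j = .tail) :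
    G.Anc (w.vert (j + 1)) (w.vert 0) ∨ G.AncS (w.vert (j + 1)) Z := by
  have hdir : G.dir (w.vert (j + 1)) (w.vert j) := by
    simpa [h₁, h₂, EdgeMk] using w.valid j hj
  induction j with
  | zero => exact Or.inl (.single hdir)
  | succ j ih =>
    rcases hopen (j + 1) (by omega) (by omega) with ⟨-, -, z, hz, hanc⟩ | ⟨-, -, hprev⟩
    · exact Or.inr ⟨z, hz, .head hdir hanc⟩
    · obtain ⟨h₂', h₁'⟩ := hprev h₁
      simp only [Nat.add_sub_cancel] at h₁' h₂'
      have hdir' : G.dir (w.vert (j + 1)) (w.vert j) := by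
        simpa [h₁', h₂', EdgeMk] using w.valid j (by omega)
      rcases ih (by omega) h₁' h₂' hdir' with h | ⟨z, hz, hanc⟩
      · exact Or.inl (.head hdir h)
      · exact Or.inr ⟨z, hz, .head hdir hanc⟩

def cutLoop (w : G.Walk n) (i j : ℕ) (hij : i ≤ j) (h : w.vert i = w.vert j) :
    G.Walk (n - (j - i)) where
  vert k := w.vert (if k < i then k else k + (j - i))
  mk1 k := w.mk1 (if k < i then k else k + (j - i))
  mk2 k := w.mk2 (if k < i then k else k + (j - i))
  valid k hk := by
    by_cases hki : k + 1 < i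
    · simpa [hki, show k < i by omega] using w.valid k (by omega)
    by_cases hki' : k < i
    · obtain rfl : i = k + 1 := by omega
      simpa [hki', show k + 1 + (j - (k + 1)) = j by omega, ← h] using w.valid k (by omega)
    · simpa [hki', hki, show k + 1 + (j - i) = k + (j - i) + 1 by omega] using
        w.valid (k + (j - i)) (by omega)

section

variable {i j : ℕ} {hij : i ≤ j} {h : w.vert i = w.vert j}

theorem openAt_cutLoop (hk : 0 < k) (hki : k ≠ i) :
    (w.cutLoop i j hij h).OpenAt Z k ↔ w.OpenAt Z (if k < i then k else k + (j - i)) := by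
  rcases lt_or_gt_of_ne hki with hki | hki
  · simp [OpenAt, cutLoop, hki, show k - 1 < i by omega]
  · simp [OpenAt, cutLoop, show ¬ k < i by omega, show ¬ k - 1 < i by omega,
      show k - 1 + (j - i) = k + (j - i) - 1 by omega]

@[simp] theorem cutLoop_vert_zero : (w.cutLoop i j hij h).vert 0 = w.vert 0 := by
  by_cases hi : 0 < i
  · simp [Walk.cutLoop, hi]
  · simp [Walk.cutLoop, show i = 0 by omega, ← h]

theorem cutLoop_vert_last (hjn : j ≤ n) : (w.cutLoop i j hij h).vert (n - (j - i)) = w.vert n := by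
  simp [Walk.cutLoop, show ¬ n - (j - i) < i by omega, show n - (j - i) + (j - i) = n by omega]

theorem MOpen.cutLoop (hw : w.MOpen Z) (hjn : j ≤ n)
    (hjunction : i = 0 ∨ j = n ∨ (w.IsCollider i ∧ w.IsCollider j)) :
    (w.cutLoop i j hij h).MOpen Z := by
  obtain ⟨h0, hn, hopen⟩ := mOpen_iff.1 hw
  refine mOpen_iff.2 ⟨?_, ?_, fun k hk hkn => ?_⟩
  · rwa [cutLoop_vert_zero]
  · rwa [cutLoop_vert_last hjn]
  by_cases hki : k = i
  · subst hki
    have hcol : w.IsCollider k ∧ w.IsCollider j :=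
      (hjunction.resolve_left (by omega)).resolve_left (by omega)
    refine Or.inl ⟨?_, ?_, ?_⟩
    · simpa [Walk.cutLoop, show k - 1 < k by omega] using hcol.1.2.2.1
    · simpa [Walk.cutLoop, show k + (j - k) = j by omega] using hcol.2.2.2.2
    · simpa [Walk.cutLoop, show k + (j - k) = j by omega] using hw.2.1 j hcol.2
  · rw [openAt_cutLoop hk hki]
    split_ifs with hki'
    · exact hopen k hk (by omega)
    · exact hopen _ (by omega) (by omega)

end

def nil (G : MixedGraph V) (a : V) : G.Walk 0 where
  vert _ := a
  mk1 _ := .tail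
  mk2 _ := .tail
  valid _ h := absurd h (Nat.not_lt_zero _)

def cons (w : G.Walk n) (e : G.EdgeMk a (w.vert 0) m₁ m₂) : G.Walk (n + 1) where
  vert k := Nat.casesOn k a w.vert
  mk1 k := Nat.casesOn k m₁ w.mk1
  mk2 k := Nat.casesOn k m₂ w.mk2
  valid
    | 0, _ => e
    | k + 1, hk => w.valid k (by omega)

theorem openAt_of_isCollider {k : ℕ} (hc : w.IsCollider k) (hZ : G.AncS (w.vert k) Z) :
    w.OpenAt Z k :=
  Or.inl ⟨hc.2.2.1, hc.2.2.2, hZ⟩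

theorem mOpen_of_isCollider (h0 : w.vert 0 ∉ Z) (hn : w.vert n ∉ Z)
    (hc : ∀ k, 0 < k → k < n → w.IsCollider k ∧ w.vert k ∈ Z) : w.MOpen Z :=
  mOpen_iff.2 ⟨h0, hn, fun k hk hkn =>
    openAt_of_isCollider (hc k hk hkn).1 ⟨_, (hc k hk hkn).2, .refl⟩⟩

end Walk

open Walk

section ColliderPath

variable {n : ℕ} {w : G.Walk n}

/-- `hbidir` holds on a shortest collider path: a bidirected edge `vert k ↔ vert n` would
shortcut it. -/
theorem IsSigmaMAG.not_undir_last_of_colliders (hG : G.IsSigmaMAG)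
    (hcol : ∀ k, 0 < k → k < n → w.IsCollider k) (hadj : ¬ G.Adj (w.vert 0) (w.vert n))
    (hbidir : ∀ k, 0 < k → k + 1 < n → ¬ G.bidir (w.vert k) (w.vert n)) :
    ∀ k, 0 < k → k < n → ¬ G.undir (w.vert k) (w.vert n) := by
  intro k
  induction k using Nat.strong_induction_on with
  | _ k ih =>
  intro hk hkn hu
  have hc := hcol k hk hkn
  by_cases hlast : k + 1 = n
  · have := hc.arrowAt_succ
    rw [hlast] at this
    exact hG.not_arrowAt_of_anterior (.single (Or.inr hu)) this
  by_cases hk1 : k = 1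
  · subst hk1
    exact hadj (hG.sigma_complete₁ _ _ _ hc.arrowAt_pred hu)
  have hpred := (hcol (k - 1) (by omega) (by omega)).arrowAt_succ
  rw [Nat.sub_add_cancel hk] at hpred
  rcases hG.bidir_or_undir_of_undir hc.arrowAt_pred hpred hu with h | h
  · exact hbidir (k - 1) (by omega) (by omega) h
  · exact ih (k - 1) (by omega) (by omega) (by omega) h

theorem IsSigmaMAG.not_undirChain_last_of_colliders (hG : G.IsSigmaMAG) (hpath : w.IsPath)
    (hcol : ∀ k, 0 < k → k < n → w.IsCollider k) (hadj : ¬ G.Adj (w.vert 0) (w.vert n))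
    (hbidir : ∀ k, 0 < k → k + 1 < n → ¬ G.bidir (w.vert k) (w.vert n)) (m : ℕ) :
    ∀ k, 0 < k → k < n → ¬ G.UndirChain m (w.vert k) (w.vert n) := by
  induction m using Nat.strong_induction_on with
  | _ m ihm =>
  intro k hk hkn hch
  induction hd : n - k using Nat.strong_induction_on generalizing k with
  | _ d ihd =>
  obtain _ | m' := m
  · exact absurd (hpath k n hkn.le le_rfl (undirChain_zero_iff.1 hch)) (by omega)
  obtain ⟨u, hku, huv⟩ := hch.exists_cons
  have hc := hcol k hk hkn
  by_cases hlast : k + 1 = n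
  · have := hc.arrowAt_succ
    rw [hlast] at this
    exact hG.not_arrowAt_of_anterior (.head (Or.inr hku) huv.anterior) this
  have hsucc := (hcol (k + 1) (by omega) (by omega)).arrowAt_pred
  rw [Nat.add_sub_cancel] at hsucc
  obtain _ | m'' := m'
  · rw [undirChain_zero_iff.1 huv] at hku
    exact hG.not_undir_last_of_colliders hcol hadj hbidir k hk hkn hku
  obtain ⟨u', huu', hu'v⟩ := huv.exists_cons
  rcases hG.bidir_or_undir_of_undir hc.arrowAt_succ hsucc hku with h | h
  · by_cases hu' : u' = w.vert k
    · exact ihm m'' (by omega) k hk hkn (hu' ▸ hu'v)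
    · have := hG.undir_of_undir_of_undir (Or.inr (G.bidir_symm _ _ h))
        (G.undir_symm _ _ hku) huu' (Ne.symm hu')
      exact ihm (m'' + 1) (by omega) k hk hkn (.cons this hu'v)
  · exact ihd (n - (k + 1)) (by omega) (k + 1) (by omega) (by omega) (.cons h (.cons huu' hu'v))
      rfl

/-- By induction on the length, a bidirected edge from an interior node to an endpoint can only
join neighbours on the path; then no interior node has an undirected walk to an endpoint, so all
of them are ancestors of the endpoints. -/
theorem IsSigmaMAG.not_isColliderPath_sepSet (hG : G.IsSigmaMAG) (hn : 0 < n)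
    (hadj : ¬ G.Adj (w.vert 0) (w.vert n)) :
    ¬ w.IsColliderPath (G.sepSet (w.vert 0) (w.vert n)) := by
  induction n using Nat.strong_induction_on with
  | _ n ih =>
  intro hw
  have no_undirChain : ∀ {w' : G.Walk n}, ¬ G.Adj (w'.vert 0) (w'.vert n) →
      w'.IsColliderPath (G.sepSet (w'.vert 0) (w'.vert n)) →
      ∀ m k, 0 < k → k < n → ¬ G.UndirChain m (w'.vert k) (w'.vert n) := by
    intro w' hadj' hw' m
    refine hG.not_undirChain_last_of_colliders hw'.1 (fun k hk hkn => (hw'.2 k hk hkn).1) hadj'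
      (fun k hk hkn hb => ?_) m
    have e : G.EdgeMk (w'.vert k) (w'.vert n) .arrow .arrow := hb
    refine ih (k + 1) (by omega) (by omega) (w := w'.shortcut k (by omega) e) ?_
      (by simpa using hw'.shortcut hk (by omega) e)
    simpa using hadj'
  have hadj' : ¬ G.Adj (w.reverse.vert 0) (w.reverse.vert n) := by
    simpa using fun h => hadj h.symm
  have hw' : w.reverse.IsColliderPath (G.sepSet (w.reverse.vert 0) (w.reverse.vert n)) := by
    simpa [sepSet_comm (w.vert n)] using hw.reverse
  have hne : w.vert 0 ≠ w.vert n := fun h => absurd (hw.1 0 n (by omega) le_rfl h) (by omega)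
  refine hG.maximal _ _ hne hadj ⟨n, w, hw.1, rfl, rfl, fun k hk hkn => ⟨(hw.2 k hk hkn).1, ?_⟩⟩
  obtain ⟨-, -, ha | hb⟩ := (hw.2 k hk hkn).2
  · refine Or.inl (ha.resolve_right fun ⟨m, hm⟩ => no_undirChain hadj' hw' m (n - k)
      (by omega) (by omega) ?_)
    simpa [show n - (n - k) = k by omega] using hm
  · exact Or.inr (hb.resolve_right fun ⟨m, hm⟩ => no_undirChain hadj hw m k hk hkn hm)

end ColliderPath

section MOpenSepSet

variable {n : ℕ} {w : G.Walk n}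

theorem IsSigmaMAG.reach_of_forward_dir (hG : G.IsSigmaMAG) (hw : w.MOpen (G.sepSet a b))
    (hn : w.vert n = b) {j : ℕ} (hj : j < n) (h₁ : w.mk1 j = .tail) (h₂ : w.mk2 j = .arrow) :
    G.Reach (w.vert j) a ∨ G.Reach (w.vert j) b :=
  (anc_or_ancS_of_forward_dir (mOpen_iff.1 hw).2.2 hj h₁ h₂).elim
    (fun h => Or.inr (Or.inl (hn ▸ h))) hG.reach_of_ancS_sepSet

theorem IsSigmaMAG.reach_of_backward_dir (hG : G.IsSigmaMAG) (hw : w.MOpen (G.sepSet a b))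
    (h0 : w.vert 0 = a) {j : ℕ} (hj : j < n) (h₁ : w.mk1 j = .arrow) (h₂ : w.mk2 j = .tail) :
    G.Reach (w.vert (j + 1)) a ∨ G.Reach (w.vert (j + 1)) b :=
  (anc_or_ancS_of_backward_dir (mOpen_iff.1 hw).2.2 hj h₁ h₂).elim
    (fun h => Or.inl (Or.inl (h0 ▸ h))) hG.reach_of_ancS_sepSet

theorem Walk.MOpen.not_reach_of_not_isCollider (hw : w.MOpen (G.sepSet a b)) {k : ℕ}
    (hkn : k < n) (hint : w.vert k ≠ a ∧ w.vert k ≠ b) (hnc : ¬ w.IsCollider k) :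
    ¬ (G.Reach (w.vert k) a ∨ G.Reach (w.vert k) b) := fun hr =>
  hw.1 k hkn.le hnc ⟨hint.1, hint.2, hr⟩

/-- The first undirected edge would have a non-collider end reaching `a` or `b`: its second node
if it starts at `a`, and otherwise its first node, as the edge before must point back
towards `a`. -/
theorem IsSigmaMAG.mk2_eq_arrow_of_mOpen_sepSet (hG : G.IsSigmaMAG) (hw : w.MOpen (G.sepSet a b))
    (h0 : w.vert 0 = a) (h1n : 1 < n) (hint : ∀ k, 0 < k → k < n → w.vert k ≠ a ∧ w.vert k ≠ b) :
    ∀ j < n, w.mk1 j = .tail → w.mk2 j = .arrow := by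
  intro j
  induction j with
  | zero =>
    intro _ h₁
    cases h₂ : w.mk2 0
    · have hu : G.undir (w.vert 0) (w.vert 1) := by
        simpa [h₁, h₂, EdgeMk] using w.valid 0 (by omega)
      refine absurd (Or.inl (Or.inr ⟨1, .cons (G.undir_symm _ _ (h0 ▸ hu)) (.refl a)⟩))
        (hw.not_reach_of_not_isCollider h1n (hint 1 one_pos h1n) fun h => ?_)
      simp [IsCollider, h₂] at h
    · rfl
  | succ j ih =>
    intro hj h₁
    rcases (mOpen_iff.1 hw).2.2 (j + 1) (by omega) hj with ⟨-, h, -⟩ | ⟨-, hin, -⟩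
    · simp [h₁] at h
    cases h₂ : w.mk2 (j + 1)
    · exfalso
      cases h₂' : w.mk2 j
      · cases h₁' : w.mk1 j
        · simpa [h₂'] using ih (by omega) h₁'
        · refine hw.not_reach_of_not_isCollider hj (hint _ (by omega) hj)
            (fun h => ?_) (hG.reach_of_backward_dir hw h0 (by omega) h₁' h₂')
          simp [IsCollider, h₂'] at h
      · simp [h₂', h₂] at hin
    · rfl

theorem IsSigmaMAG.isCollider_of_mOpen_sepSet (hG : G.IsSigmaMAG) (hw : w.MOpen (G.sepSet a b))
    (h0 : w.vert 0 = a) (hn : w.vert n = b) (h1n : 1 < n)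
    (hint : ∀ k, 0 < k → k < n → w.vert k ≠ a ∧ w.vert k ≠ b) :
    ∀ k, 0 < k → k < n → w.IsCollider k := by
  have hno_undir := hG.mk2_eq_arrow_of_mOpen_sepSet hw h0 h1n hint
  intro k hk hkn
  by_contra hnc
  apply hw.not_reach_of_not_isCollider hkn (hint k hk hkn) hnc
  cases h₁ : w.mk1 k
  · exact hG.reach_of_forward_dir hw hn hkn h₁ (hno_undir k hkn h₁)
  · have h₂ : w.mk2 (k - 1) = .tail := by
      cases h : w.mk2 (k - 1)
      · rfl
      · exact absurd ⟨hk, hkn, h, h₁⟩ hnc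
    have h₁' : w.mk1 (k - 1) = .arrow := by
      cases h : w.mk1 (k - 1)
      · simpa [h₂] using hno_undir (k - 1) (by omega) h
      · rfl
    simpa [Nat.sub_add_cancel hk] using hG.reach_of_backward_dir hw h0 (by omega) h₁' h₂

end MOpenSepSet

/-- Cutting a loop out of a shortest m-open walk (or its part before the last visit of `a` or
after the first visit of `b`) would leave it open. -/
theorem IsSigmaMAG.mSep_sepSet (hG : G.IsSigmaMAG) (hab : a ≠ b) (hadj : ¬ G.Adj a b) :
    G.MSep {a} {b} (G.sepSet a b) := by
  intro n w h0 hn hw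
  rw [Set.mem_singleton_iff] at h0 hn
  induction n using Nat.strong_induction_on with
  | _ n ih =>
  have hshorter : ∀ i j, i < j → j ≤ n → w.vert i = w.vert j →
      i = 0 ∨ j = n ∨ (w.IsCollider i ∧ w.IsCollider j) → False := fun i j hij hjn h hjunction =>
    ih (n - (j - i)) (by omega) (w.cutLoop i j hij.le h) (by simpa using h0)
      (by rwa [cutLoop_vert_last hjn]) (hw.cutLoop hjn hjunction)
  have h1n : 1 < n := by
    rcases Nat.lt_or_ge 1 n with h | h
    · exact h
    rcases Nat.le_one_iff_eq_zero_or_eq_one.1 h with rfl | rfl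
    · exact absurd (h0.symm.trans hn) hab
    · exact absurd (by simpa [h0, hn] using (w.valid 0 one_pos).adj) hadj
  have hint : ∀ k, 0 < k → k < n → w.vert k ≠ a ∧ w.vert k ≠ b := fun k hk hkn =>
    ⟨fun h => hshorter 0 k hk hkn.le (h0.trans h.symm) (Or.inl rfl),
      fun h => hshorter k n hkn le_rfl (h.trans hn.symm) (Or.inr (Or.inl rfl))⟩
  have hcol := hG.isCollider_of_mOpen_sepSet hw h0 hn h1n hint
  have hne : ∀ i j, i < j → j ≤ n → w.vert i ≠ w.vert j := by
    intro i j hij hjn h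
    rcases Nat.eq_zero_or_pos i with rfl | hi
    · rcases hjn.lt_or_eq with hjn | rfl
      · exact (hint j hij hjn).1 (h.symm.trans h0)
      · exact hab (h0.symm.trans (h.trans hn))
    rcases hjn.lt_or_eq with hjn | rfl
    · exact hshorter i j hij hjn.le h (Or.inr (Or.inr ⟨hcol i hi (by omega), hcol j (by omega) hjn⟩))
    · exact (hint i hi hij).2 (h.trans hn)
  have hpath : w.IsPath := fun i j hi hj h => by
    by_contra hij
    rcases Nat.lt_or_gt_of_ne hij with hij | hij
    exacts [hne i j hij hj h, hne j i hij hi h.symm]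
  refine hG.not_isColliderPath_sepSet (by omega) (by rwa [h0, hn]) ⟨hpath, fun k hk hkn =>
    ⟨hcol k hk hkn, ?_⟩⟩
  rw [h0, hn]
  exact ⟨(hint k hk hkn).1, (hint k hk hkn).2, hG.reach_of_ancS_sepSet (hw.2.1 k (hcol k hk hkn))⟩

theorem IsSigmaMAG.exists_mSep_of_not_adj (hG : G.IsSigmaMAG) (hab : a ≠ b) (hadj : ¬ G.Adj a b) :
    ∃ Z, a ∉ Z ∧ b ∉ Z ∧ G.MSep {a} {b} Z :=
  ⟨G.sepSet a b, fun h => h.1 rfl, fun h => h.2.1 rfl, hG.mSep_sepSet hab hadj⟩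

theorem IsSigmaMAG.adj_of_mMarkovEquiv {H₁ H₂ : MixedGraph V} (h₁ : H₁.IsSigmaMAG)
    (h₂ : H₂.IsSigmaMAG) (heq : MMarkovEquiv H₁ H₂) (hab : H₁.Adj a b) : H₂.Adj a b := by
  by_contra hnadj
  have hne : a ≠ b := by
    rintro rfl
    exact h₁.not_adj_self hab
  obtain ⟨Z, ha, hb, hsep⟩ := h₂.exists_mSep_of_not_adj hne hnadj
  obtain ⟨m₁, m₂, e⟩ := hab.exists_edgeMk
  exact (heq _ _ _).2 hsep 1 ((nil H₁ b).cons e) rfl rfl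
    (mOpen_iff.2 ⟨ha, hb, fun k hk hk1 => absurd hk1 (by omega)⟩)

theorem UnshieldedCollider.symm (h : G.UnshieldedCollider a b c) : G.UnshieldedCollider c b a :=
  ⟨h.1.symm, fun h' => h.2.1 h'.symm, h.2.2.2, h.2.2.1⟩

/-- A separator of `a` and `c` must avoid the collider `b`; in `H₂` it then blocks the
walk `a, b, c` only if that walk has an arrowhead at `b` from `a`, since the alternative
`a — b ←∗ c` would make `a` and `c` adjacent. -/
theorem IsSigmaMAG.arrowAt_of_mMarkovEquiv {H₁ H₂ : MixedGraph V} (h₁ : H₁.IsSigmaMAG)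
    (h₂ : H₂.IsSigmaMAG) (heq : MMarkovEquiv H₁ H₂) (hadj : ∀ x y, H₁.Adj x y ↔ H₂.Adj x y)
    (h : H₁.UnshieldedCollider a b c) : H₂.ArrowAt b a := by
  obtain ⟨hac, hnadj, hba, hbc⟩ := h
  obtain ⟨Z, ha, hc, hsep⟩ := h₁.exists_mSep_of_not_adj hac hnadj
  obtain ⟨m₁, e₁⟩ := arrowAt_iff_exists_edgeMk.1 hba
  obtain ⟨m₂, e₂⟩ := arrowAt_iff_exists_edgeMk.1 hbc
  have hb : b ∉ Z := fun hb => hsep 2 (((nil H₁ c).cons (edgeMk_symm e₂)).cons e₁) rfl rfl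
    (mOpen_of_isCollider ha hc fun k hk hk2 => by
      obtain rfl : k = 1 := by omega
      exact ⟨⟨hk, hk2, rfl, rfl⟩, hb⟩)
  by_contra hnarrow
  obtain ⟨m₁', e₁'⟩ : ∃ m, H₂.EdgeMk a b m .tail := by
    obtain ⟨m, m', e⟩ := ((hadj a b).1 hba.adj.symm).exists_edgeMk
    cases m'
    · exact ⟨m, e⟩
    · exact absurd (arrowAt_of_edgeMk e) hnarrow
  obtain ⟨m₃, m₄, e₂'⟩ := ((hadj b c).1 hbc.adj).exists_edgeMk
  refine (heq _ _ _).1 hsep 2 (((nil H₂ c).cons e₂').cons e₁') rfl rfl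
    (mOpen_iff.2 ⟨ha, hc, fun k hk hk2 => ?_⟩)
  obtain rfl : k = 1 := by omega
  refine Or.inr ⟨hb, fun h => absurd h (by simp [cons]), fun h₃ => ⟨rfl, ?_⟩⟩
  cases m₁'
  · obtain rfl : m₃ = .arrow := h₃
    have harrow : H₂.ArrowAt b c := arrowAt_of_edgeMk (edgeMk_symm e₂')
    exact absurd (h₂.sigma_complete₁ c b a harrow (H₂.undir_symm _ _ e₁')).symm
      (fun h => hnadj ((hadj a c).2 h))
  · rfl

theorem IsSigmaMAG.unshieldedCollider_of_mMarkovEquiv {H₁ H₂ : MixedGraph V}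
    (h₁ : H₁.IsSigmaMAG) (h₂ : H₂.IsSigmaMAG) (heq : MMarkovEquiv H₁ H₂)
    (hadj : ∀ x y, H₁.Adj x y ↔ H₂.Adj x y) (h : H₁.UnshieldedCollider a b c) :
    H₂.UnshieldedCollider a b c :=
  ⟨h.1, fun h' => h.2.1 ((hadj a c).2 h'), h₁.arrowAt_of_mMarkovEquiv h₂ heq hadj h,
    h₁.arrowAt_of_mMarkovEquiv h₂ heq hadj h.symm⟩

/-- Every separator of the endpoints of a discriminating path contains the colliders before
the discriminated node: otherwise the first one outside it is a non-collider on the open walk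
that follows the path up to it and then its edge into the last node. -/
theorem Walk.IsDiscriminating.mem_of_mSep {n : ℕ} {w : G.Walk n} {Z : Set V}
    (hd : w.IsDiscriminating) (hsep : G.MSep {w.vert 0} {w.vert n} Z) (h0 : w.vert 0 ∉ Z)
    (hn : w.vert n ∉ Z) : ∀ k, 0 < k → k < n - 1 → w.vert k ∈ Z := by
  intro k
  induction k using Nat.strong_induction_on with
  | _ k ih =>
  intro hk hkn
  by_contra hkZ
  have e : G.EdgeMk (w.vert k) (w.vert n) .tail .arrow := (hd.2.2.2 k hk hkn).2
  refine hsep (k + 1) (w.shortcut k (by omega) e) (by simp) (by simp)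
    (mOpen_iff.2 ⟨by simpa using h0, by simpa using hn, fun j hj hjk => ?_⟩)
  rcases Nat.lt_or_ge j k with hjk' | hjk'
  · refine openAt_of_isCollider ((isCollider_shortcut_of_lt hjk').2 (hd.2.2.2 j hj (by omega)).1)
      ⟨_, ?_, .refl⟩
    rw [shortcut_vert_of_le hjk'.le]
    exact ih j hjk' hj (by omega)
  · obtain rfl : j = k := by omega
    refine Or.inr ⟨by rwa [shortcut_vert_of_le le_rfl], fun _ => by simp [shortcut],
      fun h => by simp [shortcut] at h⟩

theorem IsSigmaMAG.isCollider_of_isDiscriminating {H₁ H₂ : MixedGraph V} (h₁ : H₁.IsSigmaMAG)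
    (h₂ : H₂.IsSigmaMAG) (heq : MMarkovEquiv H₁ H₂) {n : ℕ} {w₁ : H₁.Walk n} {w₂ : H₂.Walk n}
    (hv : ∀ k, w₂.vert k = w₁.vert k) (hd₁ : w₁.IsDiscriminating) (hd₂ : w₂.IsDiscriminating)
    (hc : w₁.IsCollider (n - 1)) : w₂.IsCollider (n - 1) := by
  have ⟨hn3, hpath, hnadj, hcol₁⟩ := hd₁
  obtain ⟨Z, h0, hn, hsep₁⟩ := h₁.exists_mSep_of_not_adj
    (fun h => absurd (hpath 0 n (by omega) le_rfl h) (by omega)) hnadj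
  have hmem := hd₁.mem_of_mSep hsep₁ h0 hn
  have hZ : w₁.vert (n - 1) ∉ Z := fun hZ => hsep₁ n w₁ rfl rfl
    (mOpen_of_isCollider h0 hn fun k hk hkn => by
      rcases Nat.lt_or_ge k (n - 1) with hk' | hk'
      · exact ⟨(hcol₁ k hk hk').1, hmem k hk hk'⟩
      · obtain rfl : k = n - 1 := by omega
        exact ⟨hc, hZ⟩)
  have hsep₂ : H₂.MSep {w₂.vert 0} {w₂.vert n} Z := by
    rw [hv, hv]
    exact (heq _ _ _).1 hsep₁
  by_contra hnc
  refine hsep₂ n w₂ rfl rfl (mOpen_iff.2 ⟨by rwa [hv], by rwa [hv], fun k hk hkn => ?_⟩)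
  rcases Nat.lt_or_ge k (n - 1) with hk' | hk'
  · exact openAt_of_isCollider (hd₂.2.2.2 k hk hk').1 ⟨_, by rw [hv]; exact hmem k hk hk', .refl⟩
  obtain rfl : k = n - 1 := by omega
  obtain ⟨hc₂, hdir⟩ := hd₂.2.2.2 (n - 2) (by omega) (by omega)
  have hpred : n - 1 - 1 = n - 2 := by omega
  have hsucc : n - 2 + 1 = n - 1 := by omega
  refine Or.inr ⟨by rwa [hv], fun hin => ?_, fun hout => ⟨?_, hpred ▸ hc₂.2.2.2⟩⟩
  · have h₁ : w₂.mk1 (n - 1) = .tail := by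
      cases h : w₂.mk1 (n - 1)
      · rfl
      · exact absurd ⟨by omega, by omega, hin, h⟩ hnc
    refine ⟨h₁, ?_⟩
    cases h : w₂.mk2 (n - 1)
    · have hu : H₂.undir (w₂.vert (n - 1)) (w₂.vert n) := by
        simpa [h₁, h, EdgeMk, show n - 1 + 1 = n by omega] using w₂.valid (n - 1) (by omega)
      have := hc₂.arrowAt_succ
      rw [hsucc] at this
      exact absurd this (h₂.not_arrowAt_of_anterior
        (.head (Or.inl hdir) (.single (Or.inr (H₂.undir_symm _ _ hu)))))
    · rfl
  · cases h : w₂.mk2 (n - 1 - 1)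
    · rfl
    · exact absurd ⟨by omega, by omega, h, hout⟩ hnc

end MixedGraph

/-- If two σ-MAGs `H₁`, `H₂` on the same node set are m-Markov equivalent, then they
satisfy Condition 1 (same adjacencies, same unshielded colliders, and agreement of the
collider status of the discriminated node on corresponding discriminating paths). -/
theorem mMarkovEquiv_implies_condition1 {V : Type*} (H₁ H₂ : MixedGraph V)
    (h₁ : H₁.IsSigmaMAG) (h₂ : H₂.IsSigmaMAG) (heq : MMarkovEquiv H₁ H₂) :
    Condition1 H₁ H₂ := by
  have hadj : ∀ a b, H₁.Adj a b ↔ H₂.Adj a b := fun a b =>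
    ⟨h₁.adj_of_mMarkovEquiv h₂ heq, h₂.adj_of_mMarkovEquiv h₁ heq.symm⟩
  refine ⟨hadj, fun a b c => ⟨h₁.unshieldedCollider_of_mMarkovEquiv h₂ heq hadj,
    h₂.unshieldedCollider_of_mMarkovEquiv h₁ heq.symm fun x y => (hadj x y).symm⟩,
    fun n w₁ w₂ hv hd₁ hd₂ => ⟨h₁.isCollider_of_isDiscriminating h₂ heq hv hd₁ hd₂,
      h₂.isCollider_of_isDiscriminating h₁ heq.symm (fun k => (hv k).symm) hd₂ hd₁⟩⟩
end
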